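/- arXiv:1603.01468 — 11 statements merged into one kernel-verified Lean document; each statement's English description precedes it below -/
import Mathlib

section
/- Let C be an MDS [n,k,d]_q code with q > n > 2. For every integer w with d ≤ w ≤ n and every subset X ⊆ {1,…,n} with |X| = w, there exists a codeword c ∈ C whose support is exactly X. -/
/-!
The codewords supported in `X` form a subspace `D` of dimension at least `k - (n - w) = w - d + 1`.
For `i ∈ X`, the codewords of `D` vanishing at `i` are supported on `w - 1` positions, so by the
Singleton bound they form a subspace of dimension at most `w - d`, a proper subspace of `D`.
Over a field with more than `w` elements a vector space is not the union of `w` proper subspaces,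
so some codeword of `D` is nonzero at every position of `X`.
-/

open Module

variable {F : Type*} [Field F] {ι : Type*}

variable (F) in
def vanishingOn (T : Finset ι) : Submodule F (ι → F) :=
  LinearMap.ker (LinearMap.funLeft F F (Subtype.val : T → ι))

theorem mem_vanishingOn {T : Finset ι} {x : ι → F} :
    x ∈ vanishingOn F T ↔ ∀ i ∈ T, x i = 0 := by
  simp [vanishingOn, funext_iff]

theorem finrank_le_finrank_inf_ker_add_finrank {M N : Type*} [AddCommGroup M] [Module F M]
    [FiniteDimensional F M] [AddCommGroup N] [Module F N] [FiniteDimensional F N]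
    (V : Submodule F M) (g : M →ₗ[F] N) :
    finrank F V ≤ finrank F ↥(V ⊓ LinearMap.ker g) + finrank F N := by
  have hrank := LinearMap.finrank_range_add_finrank_ker (g.domRestrict V)
  rw [LinearMap.ker_domRestrict, ← Submodule.finrank_map_subtype_eq,
    Submodule.map_comap_subtype] at hrank
  have := Submodule.finrank_le (LinearMap.range (g.domRestrict V))
  omega

theorem finrank_le_finrank_inf_vanishingOn_add_card [Fintype ι] (V : Submodule F (ι → F))
    (T : Finset ι) : finrank F V ≤ finrank F ↥(V ⊓ vanishingOn F T) + T.card := by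
  have := finrank_le_finrank_inf_ker_add_finrank V (LinearMap.funLeft F F (Subtype.val : T → ι))
  rwa [Module.finrank_fintype_fun_eq_card, Fintype.card_coe] at this

theorem hammingNorm_le_card_compl [Fintype ι] [DecidableEq ι] [DecidableEq F] {T : Finset ι}
    {x : ι → F} (hx : ∀ i ∈ T, x i = 0) : hammingNorm x ≤ Tᶜ.card :=
  Finset.card_le_card fun i hi =>
    Finset.mem_compl.mpr fun hiT => (Finset.mem_filter.mp hi).2 (hx i hiT)

theorem singleton_bound [Fintype ι] [DecidableEq ι] [DecidableEq F] {V : Submodule F (ι → F)}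
    {T : Finset ι} {d : ℕ} (hd : 0 < d) (hV : V ≤ vanishingOn F T)
    (hdist : ∀ v ∈ V, v ≠ 0 → d ≤ hammingNorm v) : finrank F V ≤ Tᶜ.card + 1 - d := by
  obtain ⟨S, hST, hS⟩ := Finset.exists_subset_card_eq (s := Tᶜ) (n := Tᶜ.card + 1 - d) (by omega)
  have hbot : V ⊓ vanishingOn F S = ⊥ := by
    refine (Submodule.eq_bot_iff _).mpr fun v ⟨hvV, hvS⟩ => ?_
    by_contra hv
    have hvanish : ∀ i ∈ T ∪ S, v i = 0 := by
      simp only [Finset.mem_union]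
      rintro i (hi | hi)
      · exact mem_vanishingOn.mp (hV hvV) i hi
      · exact mem_vanishingOn.mp hvS i hi
    have hcard : (T ∪ S)ᶜ.card = Tᶜ.card - S.card := by
      rw [Finset.compl_union, ← Finset.sdiff_eq_inter_compl, Finset.card_sdiff_of_subset hST]
    have := hdist v hvV hv
    have := hammingNorm_le_card_compl hvanish
    omega
  have := finrank_le_finrank_inf_vanishingOn_add_card V S
  rwa [hbot, finrank_bot, zero_add, hS] at this

theorem exists_forall_apply_ne_zero_of_card_lt (V : Submodule F (ι → F)) (s : Finset ι)
    (hs : s.card < ENat.card F) (hV : ∀ i ∈ s, ∃ v ∈ V, v i ≠ 0) :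
    ∃ v ∈ V, ∀ i ∈ s, v i ≠ 0 := by
  let p : s → Submodule F V := fun i => LinearMap.ker (LinearMap.proj (i : ι) ∘ₗ V.subtype)
  have hp : ∀ i, p i ≠ ⊤ := by
    rintro ⟨i, hi⟩ htop
    obtain ⟨v, hvV, hv⟩ := hV i hi
    exact hv (htop.ge (Submodule.mem_top (x := ⟨v, hvV⟩)))
  obtain ⟨⟨v, hvV⟩, -, hv⟩ := Set.exists_of_ssubset
    (Submodule.iUnion_ssubset_of_forall_ne_top_of_card_lt Finset.univ p hp (by simpa using hs))
  exact ⟨v, hvV, fun i hi hvi => hv (Set.mem_iUnion₂.mpr ⟨⟨i, hi⟩, Finset.mem_univ _, hvi⟩)⟩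

theorem mds_codeword_with_prescribed_support_general
    (q n k d : ℕ) (F : Type) [Field F] [Fintype F] [DecidableEq F]
    (hq : Fintype.card F = q)
    (hqn : n < q)
    (C : Submodule F (Fin n → F))
    (hk : Module.finrank F C = k)
    (hmin : (∀ c ∈ C, c ≠ 0 → d ≤ hammingNorm c) ∧ ∃ c ∈ C, c ≠ 0 ∧ hammingNorm c = d)
    (hMDS : d = n - k + 1)
    (w : ℕ) (hw1 : d ≤ w) (hw2 : w ≤ n)
    (X : Finset (Fin n)) (hX : X.card = w) :
    ∃ c ∈ C, ∀ i, c i ≠ 0 ↔ i ∈ X := by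
  have hkn : k ≤ n := by simpa [hk] using Submodule.finrank_le C
  set D := C ⊓ vanishingOn F Xᶜ
  have hD : w - d + 1 ≤ finrank F D := by
    have : k ≤ finrank F D + Xᶜ.card := hk ▸ finrank_le_finrank_inf_vanishingOn_add_card C Xᶜ
    rw [Finset.card_compl, Fintype.card_fin, hX] at this
    omega
  have hsupport : ∀ i ∈ X, ∃ v ∈ D, v i ≠ 0 := by
    intro i hi
    by_contra! hvanish
    have hDle : D ≤ vanishingOn F (insert i Xᶜ) := fun v hv =>
      mem_vanishingOn.mpr <| Finset.forall_mem_insert .. |>.mpr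
        ⟨hvanish v hv, mem_vanishingOn.mp hv.2⟩
    have := singleton_bound (by omega) hDle fun v hv => hmin.1 v hv.1
    rw [Finset.compl_insert, compl_compl, Finset.card_erase_of_mem hi, hX] at this
    omega
  obtain ⟨v, ⟨hvC, hvX⟩, hv⟩ := exists_forall_apply_ne_zero_of_card_lt D X
    (by rw [ENat.card_eq_coe_fintype_card, hq]; exact_mod_cast hX ▸ hw2.trans_lt hqn) hsupport
  refine ⟨v, hvC, fun i => ⟨fun hvi => ?_, hv i⟩⟩
  by_contra hiX
  exact hvi (mem_vanishingOn.mp hvX i (Finset.mem_compl.mpr hiX))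

/-- A non-binary MDS [n,k,d]_q code with q > n > 2 has, for every
weight d ≤ w ≤ n and every set X of w positions, a codeword whose support is
exactly X. -/
theorem mds_codeword_with_prescribed_support
    (q n k d : ℕ) (F : Type) [Field F] [Fintype F] [DecidableEq F]
    (hq : Fintype.card F = q)
    (hqn : n < q) (hn : 2 < n)
    (C : Submodule F (Fin n → F))
    (hk : Module.finrank F C = k)
    (hmin : (∀ c ∈ C, c ≠ 0 → d ≤ hammingNorm c) ∧ ∃ c ∈ C, c ≠ 0 ∧ hammingNorm c = d)
    (hMDS : d = n - k + 1)
    (w : ℕ) (hw1 : d ≤ w) (hw2 : w ≤ n)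
    (X : Finset (Fin n)) (hX : X.card = w) :
    ∃ c ∈ C, ∀ i, c i ≠ 0 ↔ i ∈ X :=
  mds_codeword_with_prescribed_support_general q n k d F hq hqn C hk hmin hMDS w hw1 hw2 X hX
end

section
/- Let S be a type-II stopping set of size exactly d_1 d_2 for a product code with MDS components of minimum distances d_1 and d_2. Then S equals its rectangular support: S is a full d_1 × d_2 rectangle (the set of row indices of S has size d_1, the set of column indices has size d_2, and S contains all pairs). -/
/-- A type-II stopping set of a product code with MDS column distance `d₁` and
row distance `d₂`: a nonempty set of positions in the `n₁ × n₂` array such that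
every nonempty row contains at least `d₂` elements and every nonempty column
contains at least `d₁` elements. -/
def IsStoppingSet {n₁ n₂ : ℕ} (d₁ d₂ : ℕ) (S : Finset (Fin n₁ × Fin n₂)) : Prop :=
  S.Nonempty ∧
  (∀ i : Fin n₁, (∃ p ∈ S, p.1 = i) → d₂ ≤ (S.filter fun p => p.1 = i).card) ∧
  (∀ j : Fin n₂, (∃ p ∈ S, p.2 = j) → d₁ ≤ (S.filter fun p => p.2 = j).card)

/-- a type-II stopping set of size exactly `d₁ * d₂` equals its
rectangular support: a full `d₁ × d₂` rectangle. -/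
theorem stoppingSet_of_minimal_card_is_rectangle
    (n₁ n₂ d₁ d₂ : ℕ) (hd₁ : 1 ≤ d₁) (hd₂ : 1 ≤ d₂)
    (S : Finset (Fin n₁ × Fin n₂))
    (h : IsStoppingSet d₁ d₂ S)
    (hcard : S.card = d₁ * d₂) :
    (S.image Prod.fst).card = d₁ ∧ (S.image Prod.snd).card = d₂ ∧
      S = (S.image Prod.fst) ×ˢ (S.image Prod.snd) := by
  obtain ⟨hne, hrow, hcol⟩ := h
  set A := S.image Prod.fst with hA
  set B := S.image Prod.snd with hB
  -- S.card ≥ A.card * d₂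
  have hsum1 : S.card = ∑ i ∈ A, (S.filter fun p => p.1 = i).card :=
    Finset.card_eq_sum_card_fiberwise (fun p hp => Finset.mem_image_of_mem _ hp)
  have h1 : A.card * d₂ ≤ S.card := by
    rw [hsum1]
    calc A.card * d₂ = ∑ _i ∈ A, d₂ := by rw [Finset.sum_const, smul_eq_mul]
    _ ≤ ∑ i ∈ A, (S.filter fun p => p.1 = i).card := by
        apply Finset.sum_le_sum
        intro i hi
        obtain ⟨p, hp, hpi⟩ := Finset.mem_image.mp hi
        exact hrow i ⟨p, hp, hpi⟩
  have hsum2 : S.card = ∑ j ∈ B, (S.filter fun p => p.2 = j).card :=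
    Finset.card_eq_sum_card_fiberwise (fun p hp => Finset.mem_image_of_mem _ hp)
  have h2 : B.card * d₁ ≤ S.card := by
    rw [hsum2]
    calc B.card * d₁ = ∑ _j ∈ B, d₁ := by rw [Finset.sum_const, smul_eq_mul]
    _ ≤ ∑ j ∈ B, (S.filter fun p => p.2 = j).card := by
        apply Finset.sum_le_sum
        intro j hj
        obtain ⟨p, hp, hpj⟩ := Finset.mem_image.mp hj
        exact hcol j ⟨p, hp, hpj⟩
  have hAle : A.card ≤ d₁ := by
    have := h1.trans_eq hcard
    exact Nat.le_of_mul_le_mul_right this hd₂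
  have hBle : B.card ≤ d₂ := by
    have := h2.trans_eq hcard
    rw [Nat.mul_comm d₁ d₂] at this
    exact Nat.le_of_mul_le_mul_right this hd₁
  have hsub : S ⊆ A ×ˢ B := by
    intro p hp
    exact Finset.mem_product.mpr ⟨Finset.mem_image_of_mem _ hp, Finset.mem_image_of_mem _ hp⟩
  have hge : d₁ * d₂ ≤ A.card * B.card := by
    have := Finset.card_le_card hsub
    rwa [Finset.card_product, hcard] at this
  have hle : A.card * B.card ≤ d₁ * d₂ := Nat.mul_le_mul hAle hBle
  have hAB : A.card * B.card = d₁ * d₂ := le_antisymm hle hge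
  have hBne : B.Nonempty := hne.image _
  have hBpos : 1 ≤ B.card := Finset.card_pos.mpr hBne
  have hA' : A.card = d₁ := by
    rcases lt_or_eq_of_le hAle with hlt | heq
    · exfalso
      have : A.card * B.card < d₁ * d₂ :=
        Nat.mul_lt_mul_of_lt_of_le hlt hBle (by omega)
      omega
    · exact heq
  have hB' : B.card = d₂ := by
    have : d₁ * B.card = d₁ * d₂ := hA' ▸ hAB
    
    exact Nat.eq_of_mul_eq_mul_left (by omega) this
  refine ⟨hA', hB', ?_⟩
  apply Finset.eq_of_subset_of_card_le hsub
  rw [Finset.card_product, hA', hB', hcard]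
end

section
/- Let S be a type-II stopping set (for MDS components with distances d_1, d_2) with d_1 d_2 < |S| < d_1(d_2+1). Then no such S exists; equivalently, there is no stopping set whose size lies strictly between d_1 d_2 and d_1(d_2+1). -/
/-- there is no type-II stopping set whose size lies strictly
between `d₁ d₂` and `d₁ (d₂ + 1)` (components with `d₁ ≤ d₂`). -/
theorem no_stoppingSet_strictly_between
    (n₁ n₂ d₁ d₂ : ℕ) (hd : d₁ ≤ d₂)
    (S : Finset (Fin n₁ × Fin n₂))
    (h : IsStoppingSet d₁ d₂ S) :
    ¬(d₁ * d₂ < S.card ∧ S.card < d₁ * (d₂ + 1)) := by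
  rintro ⟨h1, h2⟩
  obtain ⟨hne, hrow, hcol⟩ := h
  have hd1 : 0 < d₁ := by
    rcases Nat.eq_zero_or_pos d₁ with hz | hz
    · subst hz; omega
    · exact hz
  set R := S.image Prod.fst with hR
  set C := S.image Prod.snd with hC
  have hcardR : S.card = ∑ i ∈ R, (S.filter fun p => p.1 = i).card :=
    Finset.card_eq_sum_card_fiberwise (fun p hp => Finset.mem_image_of_mem _ hp)
  have hcardC : S.card = ∑ j ∈ C, (S.filter fun p => p.2 = j).card :=
    Finset.card_eq_sum_card_fiberwise (fun p hp => Finset.mem_image_of_mem _ hp)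
  have hRd2 : R.card * d₂ ≤ S.card := by
    rw [hcardR]
    calc R.card * d₂ = ∑ _i ∈ R, d₂ := by rw [Finset.sum_const, smul_eq_mul]
    _ ≤ _ := by
        apply Finset.sum_le_sum
        intro i hi
        obtain ⟨p, hp, hpi⟩ := Finset.mem_image.mp hi
        exact hrow i ⟨p, hp, hpi⟩
  have hcolR : ∀ j : Fin n₂, (S.filter fun q => q.2 = j).card ≤ R.card := by
    intro j
    apply Finset.card_le_card_of_injOn Prod.fst
    · intro q hq
      exact Finset.mem_image_of_mem _ (Finset.mem_filter.mp hq).1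
    · intro a ha b hb hab
      exact Prod.ext hab
        ((Finset.mem_filter.mp ha).2.trans (Finset.mem_filter.mp hb).2.symm)
  have hRd1 : d₁ ≤ R.card := by
    obtain ⟨p, hp⟩ := hne
    exact le_trans (hcol p.2 ⟨p, hp, rfl⟩) (hcolR p.2)
  rcases eq_or_lt_of_le hRd1 with heq | hlt
  · -- R.card = d₁ : every nonempty column has exactly d₁ elements
    have hcolfix : ∀ j ∈ C, (S.filter fun p => p.2 = j).card = d₁ := by
      intro j hj
      obtain ⟨p, hp, hpj⟩ := Finset.mem_image.mp hj
      have hge := hcol j ⟨p, hp, hpj⟩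
      have hle := hcolR j
      omega
    have hSC : S.card = C.card * d₁ := by
      rw [hcardC, Finset.sum_congr rfl hcolfix, Finset.sum_const, smul_eq_mul]
    have hC2 : d₂ < C.card := by
      have : d₂ * d₁ < C.card * d₁ := by
        calc d₂ * d₁ = d₁ * d₂ := Nat.mul_comm _ _
        _ < S.card := h1
        _ = C.card * d₁ := hSC
      exact Nat.lt_of_mul_lt_mul_right this
    have : d₁ * (d₂ + 1) ≤ S.card := by
      rw [hSC]
      calc d₁ * (d₂ + 1) = (d₂ + 1) * d₁ := Nat.mul_comm _ _
      _ ≤ C.card * d₁ := Nat.mul_le_mul_right _ hC2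
    omega
  · have : d₁ * (d₂ + 1) ≤ S.card := by
      calc d₁ * (d₂ + 1) = d₁ * d₂ + d₁ := by ring
      _ ≤ d₁ * d₂ + d₂ := by omega
      _ = (d₁ + 1) * d₂ := by ring
      _ ≤ R.card * d₂ := Nat.mul_le_mul_right _ hlt
      _ ≤ S.card := hRd2
    omega
end

section
/- For a product code with equal component distances d_1 = d_2 = d ≥ 2, the number of type-II stopping sets of size exactly d² in an n_1 × n_2 array is C(n_1, d)·C(n_2, d), and all of them are obvious (full d × d rectangles). -/
lemma stop_structure {n₁ n₂ d : ℕ} (hd : 2 ≤ d) (S : Finset (Fin n₁ × Fin n₂))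
    (hS : IsStoppingSet d d S) (hcard : S.card = d ^ 2) :
    (S.image Prod.fst).card = d ∧ (S.image Prod.snd).card = d ∧
      S = (S.image Prod.fst) ×ˢ (S.image Prod.snd) := by
  obtain ⟨hne, hrow, hcol⟩ := hS
  set R := S.image Prod.fst with hR
  set C := S.image Prod.snd with hC
  have hd0 : 0 < d := by omega
  have hRle : R.card * d ≤ d ^ 2 := by
    calc R.card * d = ∑ _i ∈ R, d := by rw [Finset.sum_const, smul_eq_mul, mul_comm]
    _ ≤ ∑ i ∈ R, (S.filter fun p => p.1 = i).card := by
        apply Finset.sum_le_sum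
        intro i hi
        obtain ⟨p, hp, hpi⟩ := Finset.mem_image.mp hi
        exact hrow i ⟨p, hp, hpi⟩
    _ = S.card :=
        (Finset.card_eq_sum_card_fiberwise (fun p hp => Finset.mem_image_of_mem _ hp)).symm
    _ = d ^ 2 := hcard
  have hCle : C.card * d ≤ d ^ 2 := by
    calc C.card * d = ∑ _j ∈ C, d := by rw [Finset.sum_const, smul_eq_mul, mul_comm]
    _ ≤ ∑ j ∈ C, (S.filter fun p => p.2 = j).card := by
        apply Finset.sum_le_sum
        intro j hj
        obtain ⟨p, hp, hpj⟩ := Finset.mem_image.mp hj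
        exact hcol j ⟨p, hp, hpj⟩
    _ = S.card :=
        (Finset.card_eq_sum_card_fiberwise (fun p hp => Finset.mem_image_of_mem _ hp)).symm
    _ = d ^ 2 := hcard
  have hRd : R.card ≤ d := by
    have : R.card * d ≤ d * d := by rwa [← pow_two]
    exact Nat.le_of_mul_le_mul_right this hd0
  have hCd : C.card ≤ d := by
    have : C.card * d ≤ d * d := by rwa [← pow_two]
    exact Nat.le_of_mul_le_mul_right this hd0
  have hsub : S ⊆ R ×ˢ C := by
    intro p hp
    exact Finset.mem_product.mpr ⟨Finset.mem_image_of_mem _ hp, Finset.mem_image_of_mem _ hp⟩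
  have hge : d ^ 2 ≤ R.card * C.card := by
    have := Finset.card_le_card hsub
    rwa [Finset.card_product, hcard] at this
  have hCeq : C.card = d := by nlinarith
  have hReq : R.card = d := by nlinarith
  refine ⟨hReq, hCeq, ?_⟩
  apply Finset.eq_of_subset_of_card_le hsub
  rw [Finset.card_product, hReq, hCeq, hcard, pow_two]

lemma prod_stop {n₁ n₂ d : ℕ} (hd : 2 ≤ d) (A : Finset (Fin n₁)) (B : Finset (Fin n₂))
    (hA : A.card = d) (hB : B.card = d) :
    IsStoppingSet d d (A ×ˢ B) ∧ (A ×ˢ B).card = d ^ 2 := by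
  have hd0 : 0 < d := by omega
  have hAne : A.Nonempty := Finset.card_pos.mp (by omega)
  have hBne : B.Nonempty := Finset.card_pos.mp (by omega)
  refine ⟨⟨hAne.product hBne, ?_, ?_⟩, ?_⟩
  · intro i ⟨p, hp, hpi⟩
    have hiA : i ∈ A := hpi ▸ (Finset.mem_product.mp hp).1
    have : (A ×ˢ B).filter (fun p => p.1 = i) = {i} ×ˢ B := by
      ext ⟨a, b⟩
      simp only [Finset.mem_filter, Finset.mem_product, Finset.mem_singleton]
      constructor
      · rintro ⟨⟨_, hb⟩, rfl⟩; exact ⟨rfl, hb⟩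
      · rintro ⟨rfl, hb⟩; exact ⟨⟨hiA, hb⟩, rfl⟩
    rw [this, Finset.card_product, Finset.card_singleton, one_mul, hB]
  · intro j ⟨p, hp, hpj⟩
    have hjB : j ∈ B := hpj ▸ (Finset.mem_product.mp hp).2
    have : (A ×ˢ B).filter (fun p => p.2 = j) = A ×ˢ {j} := by
      ext ⟨a, b⟩
      simp only [Finset.mem_filter, Finset.mem_product, Finset.mem_singleton]
      constructor
      · rintro ⟨⟨ha, _⟩, rfl⟩; exact ⟨ha, rfl⟩
      · rintro ⟨ha, rfl⟩; exact ⟨⟨ha, hjB⟩, rfl⟩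
    rw [this, Finset.card_product, Finset.card_singleton, mul_one, hA]
  · rw [Finset.card_product, hA, hB, pow_two]

/-- for `d₁ = d₂ = d ≥ 2`, the number of type-II stopping sets of
size `d²` in an `n₁ × n₂` array is `C(n₁,d)·C(n₂,d)`, and all of them are
obvious (full `d × d` rectangles). -/
theorem count_stoppingSets_d_sq
    (n₁ n₂ d : ℕ) (hd : 2 ≤ d) :
    Set.ncard {S : Finset (Fin n₁ × Fin n₂) | IsStoppingSet d d S ∧ S.card = d ^ 2}
        = n₁.choose d * n₂.choose d ∧
    ∀ S : Finset (Fin n₁ × Fin n₂), IsStoppingSet d d S → S.card = d ^ 2 →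
      (S.image Prod.fst).card = d ∧ (S.image Prod.snd).card = d ∧
        S = (S.image Prod.fst) ×ˢ (S.image Prod.snd) := by
  refine ⟨?_, fun S hS hc => stop_structure hd S hS hc⟩
  classical
  set T : Finset (Finset (Fin n₁ × Fin n₂)) :=
    ((Finset.univ.powersetCard d : Finset (Finset (Fin n₁))) ×ˢ
      (Finset.univ.powersetCard d : Finset (Finset (Fin n₂)))).image
        (fun p => p.1 ×ˢ p.2) with hT
  have hset : {S : Finset (Fin n₁ × Fin n₂) | IsStoppingSet d d S ∧ S.card = d ^ 2} = ↑T := by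
    ext S
    simp only [Set.mem_setOf_eq, hT, Finset.coe_image, Set.mem_image, Finset.mem_coe,
      Finset.mem_product, Finset.mem_powersetCard_univ, Prod.exists]
    constructor
    · rintro ⟨hS, hc⟩
      obtain ⟨h1, h2, h3⟩ := stop_structure hd S hS hc
      exact ⟨S.image Prod.fst, S.image Prod.snd, ⟨h1, h2⟩, h3.symm⟩
    · rintro ⟨A, B, ⟨hA, hB⟩, rfl⟩
      exact prod_stop hd A B hA hB
  rw [hset, Set.ncard_coe_finset, hT]
  rw [Finset.card_image_of_injOn, Finset.card_product, Finset.card_powersetCard,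
    Finset.card_powersetCard, Finset.card_univ, Finset.card_univ, Fintype.card_fin,
    Fintype.card_fin]
  rintro ⟨A, B⟩ hAB ⟨A', B'⟩ hAB' heq
  simp only [Finset.mem_coe, Finset.mem_product, Finset.mem_powersetCard_univ] at hAB hAB'
  have hd0 : 0 < d := by omega
  have hBne : B.Nonempty := Finset.card_pos.mp (by omega)
  have hAne : A.Nonempty := Finset.card_pos.mp (by omega)
  have hA' : (A ×ˢ B).image Prod.fst = A := Finset.product_image_fst hBne
  have hB' : (A ×ˢ B).image Prod.snd = B := Finset.product_image_snd hAne
  have hA2 : (A' ×ˢ B').image Prod.fst = A' := Finset.product_image_fst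
    (Finset.card_pos.mp (by omega))
  have hB2 : (A' ×ˢ B').image Prod.snd = B' := Finset.product_image_snd
    (Finset.card_pos.mp (by omega))
  simp only at heq
  have e1 : A = A' := by rw [← hA', ← hA2, heq]
  have e2 : B = B' := by rw [← hB', ← hB2, heq]
  simp [e1, e2]
end

section
/- For a product code with d_1 = d_2 = d ≥ 2, the number of type-II stopping sets of size d(d+1) contained in an n_1 × n_2 array equals C(n_1,d)C(n_2,d+1) + C(n_1,d+1)C(n_2,d) + (d+1)!·C(n_1,d+1)·C(n_2,d+1). -/
open Finset

namespace StoppingAux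

/-- Index type for the classification of stopping sets of size `d(d+1)`. -/
abbrev Idx (n₁ n₂ d : ℕ) :=
  ((Finset (Fin n₁) × Finset (Fin n₂)) ⊕ (Finset (Fin n₁) × Finset (Fin n₂))) ⊕
    ({R : Finset (Fin n₁) // R.card = d + 1} × (Fin (d + 1) ↪ Fin n₂))

noncomputable def Omega (n₁ n₂ d : ℕ) : Finset (Idx n₁ n₂ d) :=
  ((powersetCard d univ ×ˢ powersetCard (d + 1) univ).disjSum
    (powersetCard (d + 1) univ ×ˢ powersetCard d univ)).disjSum univ

def toSet {n₁ n₂ d : ℕ} : Idx n₁ n₂ d → Finset (Fin n₁ × Fin n₂)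
  | .inl (.inl (R, C)) => R ×ˢ C
  | .inl (.inr (R, C)) => R ×ˢ C
  | .inr (⟨R, hR⟩, g) =>
      (R ×ˢ univ.image g) \ (univ.image fun k => (R.orderEmbOfFin hR k, g k))

variable {n₁ n₂ d : ℕ}

lemma card_Omega (n₁ n₂ d : ℕ) :
    (Omega n₁ n₂ d).card
      = n₁.choose d * n₂.choose (d + 1) + n₁.choose (d + 1) * n₂.choose d
        + n₁.choose (d + 1) * ((d + 1).factorial * n₂.choose (d + 1)) := by
  classical
  have hsub : Fintype.card {R : Finset (Fin n₁) // R.card = d + 1} = n₁.choose (d + 1) := by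
    rw [Fintype.card_subtype]
    have : (univ.filter fun R : Finset (Fin n₁) => R.card = d + 1)
        = powersetCard (d + 1) (univ : Finset (Fin n₁)) := by
      rw [powersetCard_eq_filter, powerset_univ]
    rw [this, card_powersetCard, card_univ, Fintype.card_fin]
  have hemb : Fintype.card (Fin (d + 1) ↪ Fin n₂) = (d + 1).factorial * n₂.choose (d + 1) := by
    rw [Fintype.card_embedding_eq, Fintype.card_fin, Fintype.card_fin,
      Nat.descFactorial_eq_factorial_mul_choose]
  rw [Omega, card_disjSum, card_disjSum, card_product, card_product,
    card_powersetCard, card_powersetCard, card_powersetCard, card_powersetCard]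
  simp only [card_univ, Fintype.card_prod, hsub, hemb, Fintype.card_fin]

lemma rowfilter_prod (R : Finset (Fin n₁)) (C : Finset (Fin n₂)) {i : Fin n₁} (hi : i ∈ R) :
    ((R ×ˢ C).filter fun p => p.1 = i).card = C.card := by
  classical
  rw [filter_product_left (p := (· = i)), card_product, filter_eq', if_pos hi, card_singleton, one_mul]

lemma colfilter_prod (R : Finset (Fin n₁)) (C : Finset (Fin n₂)) {j : Fin n₂} (hj : j ∈ C) :
    ((R ×ˢ C).filter fun p => p.2 = j).card = R.card := by
  classical
  rw [filter_product_right (q := (· = j)), card_product, filter_eq', if_pos hj, card_singleton, mul_one]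

lemma stopping_prod (hd : 1 ≤ d) {R : Finset (Fin n₁)} {C : Finset (Fin n₂)}
    (hR : d ≤ R.card) (hC : d ≤ C.card) : IsStoppingSet d d (R ×ˢ C) := by
  classical
  have hRne : R.Nonempty := card_pos.1 (lt_of_lt_of_le hd hR)
  have hCne : C.Nonempty := card_pos.1 (lt_of_lt_of_le hd hC)
  refine ⟨hRne.product hCne, fun i hi => ?_, fun j hj => ?_⟩
  · obtain ⟨p, hp, hpi⟩ := hi
    have : i ∈ R := by
      rw [← hpi]; exact (mem_product.1 hp).1
    rw [rowfilter_prod R C this]; exact hC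
  · obtain ⟨p, hp, hpj⟩ := hj
    have : j ∈ C := by
      rw [← hpj]; exact (mem_product.1 hp).2
    rw [colfilter_prod R C this]; exact hR

lemma filter_sdiff' (A B : Finset (Fin n₁ × Fin n₂)) (p : Fin n₁ × Fin n₂ → Prop)
    [DecidablePred p] : (A \ B).filter p = A.filter p \ B.filter p := by
  ext x; simp [mem_filter, mem_sdiff]; tauto

section CaseC

variable {R : Finset (Fin n₁)} (hR : R.card = d + 1) (g : Fin (d + 1) ↪ Fin n₂)

lemma caseC_T_subset :
    (univ.image fun k => (R.orderEmbOfFin hR k, g k)) ⊆ R ×ˢ univ.image g := by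
  classical
  intro p hp
  obtain ⟨k, _, rfl⟩ := mem_image.1 hp
  exact mem_product.2 ⟨R.orderEmbOfFin_mem hR k, mem_image_of_mem _ (mem_univ k)⟩

lemma caseC_T_card :
    (univ.image fun k => (R.orderEmbOfFin hR k, g k)).card = d + 1 := by
  classical
  rw [card_image_of_injective _ fun a b hab => (R.orderEmbOfFin hR).injective
    (congrArg Prod.fst hab), card_univ, Fintype.card_fin]

lemma caseC_T_rowfilter {i : Fin n₁} (hi : i ∈ R) :
    ((univ.image fun k => (R.orderEmbOfFin hR k, g k)).filter fun p => p.1 = i).card = 1 := by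
  classical
  obtain ⟨k₀, hk₀⟩ : ∃ k, R.orderEmbOfFin hR k = i := by
    have h1 := R.range_orderEmbOfFin hR
    have h2 : (i : Fin n₁) ∈ Set.range (R.orderEmbOfFin hR) := by rw [h1]; exact hi
    exact h2
  have huniq : ∀ k, R.orderEmbOfFin hR k = i → k = k₀ := fun k hk =>
    (R.orderEmbOfFin hR).injective (hk.trans hk₀.symm)
  have : ((univ.image fun k => (R.orderEmbOfFin hR k, g k)).filter fun p => p.1 = i)
      = {(i, g k₀)} := by
    ext p
    simp only [mem_filter, mem_image, mem_univ, true_and, mem_singleton]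
    constructor
    · rintro ⟨⟨k, rfl⟩, h1⟩
      have hk := huniq k h1
      subst hk
      simp [Prod.ext_iff]
      exact h1
    · rintro rfl
      exact ⟨⟨k₀, by rw [hk₀]⟩, rfl⟩
  rw [this, card_singleton]

lemma caseC_T_colfilter {j : Fin n₂} (hj : j ∈ univ.image g) :
    ((univ.image fun k => (R.orderEmbOfFin hR k, g k)).filter fun p => p.2 = j).card = 1 := by
  classical
  obtain ⟨k₀, -, hk₀⟩ := mem_image.1 hj
  have huniq : ∀ k, g k = j → k = k₀ := fun k hk => g.injective (hk.trans hk₀.symm)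
  have : ((univ.image fun k => (R.orderEmbOfFin hR k, g k)).filter fun p => p.2 = j)
      = {(R.orderEmbOfFin hR k₀, j)} := by
    ext p
    simp only [mem_filter, mem_image, mem_univ, true_and, mem_singleton]
    constructor
    · rintro ⟨⟨k, rfl⟩, h1⟩
      have hk := huniq k h1
      subst hk
      simp [Prod.ext_iff]
      exact h1
    · rintro rfl
      exact ⟨⟨k₀, by rw [hk₀]⟩, rfl⟩
  rw [this, card_singleton]

lemma caseC_card :
    (toSet (.inr (⟨R, hR⟩, g)) : Finset (Fin n₁ × Fin n₂)).card = d * (d + 1) := by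
  classical
  show ((R ×ˢ univ.image g) \ _).card = _
  rw [card_sdiff_of_subset (caseC_T_subset hR g), caseC_T_card hR g, card_product, hR,
    card_image_of_injective _ g.injective, card_univ, Fintype.card_fin]
  have : (d + 1) * (d + 1) = d * (d + 1) + (d + 1) := by ring
  omega

lemma caseC_rowfilter {i : Fin n₁} (hi : i ∈ R) :
    ((toSet (.inr (⟨R, hR⟩, g)) : Finset (Fin n₁ × Fin n₂)).filter fun p => p.1 = i).card = d := by
  classical
  show (((R ×ˢ univ.image g) \ _).filter fun p => p.1 = i).card = d
  rw [filter_sdiff', card_sdiff_of_subset (filter_subset_filter _ (caseC_T_subset hR g)),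
    rowfilter_prod _ _ hi, caseC_T_rowfilter hR g hi,
    card_image_of_injective _ g.injective, card_univ, Fintype.card_fin]
  omega

lemma caseC_colfilter {j : Fin n₂} (hj : j ∈ univ.image g) :
    ((toSet (.inr (⟨R, hR⟩, g)) : Finset (Fin n₁ × Fin n₂)).filter fun p => p.2 = j).card = d := by
  classical
  show (((R ×ˢ univ.image g) \ _).filter fun p => p.2 = j).card = d
  rw [filter_sdiff', card_sdiff_of_subset (filter_subset_filter _ (caseC_T_subset hR g)),
    colfilter_prod _ _ hj, caseC_T_colfilter hR g hj, hR]
  omega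

lemma caseC_stopping (hd : 1 ≤ d) :
    IsStoppingSet d d (toSet (.inr (⟨R, hR⟩, g)) : Finset (Fin n₁ × Fin n₂)) := by
  classical
  have hsub : (toSet (.inr (⟨R, hR⟩, g)) : Finset (Fin n₁ × Fin n₂)) ⊆ R ×ˢ univ.image g :=
    sdiff_subset
  refine ⟨?_, fun i hi => ?_, fun j hj => ?_⟩
  · rw [← card_pos, caseC_card hR g]
    exact Nat.mul_pos hd (Nat.succ_pos d)
  · obtain ⟨p, hp, hpi⟩ := hi
    have : i ∈ R := by rw [← hpi]; exact (mem_product.1 (hsub hp)).1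
    rw [caseC_rowfilter hR g this]
  · obtain ⟨p, hp, hpj⟩ := hj
    have : j ∈ univ.image g := by rw [← hpj]; exact (mem_product.1 (hsub hp)).2
    rw [caseC_colfilter hR g this]

lemma caseC_rowSet (hd : 1 ≤ d) :
    (toSet (.inr (⟨R, hR⟩, g)) : Finset (Fin n₁ × Fin n₂)).image Prod.fst = R := by
  classical
  have hsub : (toSet (.inr (⟨R, hR⟩, g)) : Finset (Fin n₁ × Fin n₂)) ⊆ R ×ˢ univ.image g :=
    sdiff_subset
  apply Subset.antisymm
  · intro i hi
    obtain ⟨p, hp, rfl⟩ := mem_image.1 hi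
    exact (mem_product.1 (hsub hp)).1
  · intro i hi
    have h1 := caseC_rowfilter hR g hi
    have : ((toSet (.inr (⟨R, hR⟩, g)) : Finset (Fin n₁ × Fin n₂)).filter
        fun p => p.1 = i).Nonempty := by
      rw [← card_pos, h1]; exact hd
    obtain ⟨p, hp⟩ := this
    rw [mem_filter] at hp
    exact hp.2 ▸ mem_image_of_mem _ hp.1

lemma caseC_colSet (hd : 1 ≤ d) :
    (toSet (.inr (⟨R, hR⟩, g)) : Finset (Fin n₁ × Fin n₂)).image Prod.snd = univ.image g := by
  classical
  have hsub : (toSet (.inr (⟨R, hR⟩, g)) : Finset (Fin n₁ × Fin n₂)) ⊆ R ×ˢ univ.image g :=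
    sdiff_subset
  apply Subset.antisymm
  · intro j hj
    obtain ⟨p, hp, rfl⟩ := mem_image.1 hj
    exact (mem_product.1 (hsub hp)).2
  · intro j hj
    have h1 := caseC_colfilter hR g hj
    have : ((toSet (.inr (⟨R, hR⟩, g)) : Finset (Fin n₁ × Fin n₂)).filter
        fun p => p.2 = j).Nonempty := by
      rw [← card_pos, h1]; exact hd
    obtain ⟨p, hp⟩ := this
    rw [mem_filter] at hp
    exact hp.2 ▸ mem_image_of_mem _ hp.1

end CaseC

lemma toSet_mem (hd : 2 ≤ d) {x : Idx n₁ n₂ d} (hx : x ∈ Omega n₁ n₂ d) :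
    IsStoppingSet d d (toSet x) ∧ (toSet x).card = d * (d + 1) := by
  classical
  have hd1 : 1 ≤ d := le_trans one_le_two hd
  rcases x with (⟨R, C⟩ | ⟨R, C⟩) | ⟨⟨R, hR⟩, g⟩
  · simp only [Omega, inl_mem_disjSum, mem_product, mem_powersetCard_univ] at hx
    obtain ⟨hR, hC⟩ := hx
    refine ⟨stopping_prod hd1 (le_of_eq hR.symm) (by omega), ?_⟩
    show (R ×ˢ C).card = _
    rw [card_product, hR, hC]
  · simp only [Omega, inl_mem_disjSum, inr_mem_disjSum, mem_product,
      mem_powersetCard_univ] at hx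
    obtain ⟨hR, hC⟩ := hx
    refine ⟨stopping_prod hd1 (by omega) (le_of_eq hC.symm), ?_⟩
    show (R ×ˢ C).card = _
    rw [card_product, hR, hC, Nat.mul_comm]
  · exact ⟨caseC_stopping hR g hd1, caseC_card hR g⟩

lemma toSet_injOn (hd : 2 ≤ d) {x y : Idx n₁ n₂ d} (hx : x ∈ Omega n₁ n₂ d)
    (hy : y ∈ Omega n₁ n₂ d) (h : toSet x = toSet y) : x = y := by
  classical
  have hd1 : 1 ≤ d := le_trans one_le_two hd
  -- the row/column "signature" of each case
  have key : ∀ z : Idx n₁ n₂ d, z ∈ Omega n₁ n₂ d →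
      ((toSet z).image Prod.fst).card
        = (Sum.elim (Sum.elim (fun _ => d) (fun _ => d + 1)) (fun _ => d + 1) z) ∧
      ((toSet z).image Prod.snd).card
        = (Sum.elim (Sum.elim (fun _ => d + 1) (fun _ => d)) (fun _ => d + 1) z) := by
    intro z hz
    rcases z with (⟨R, C⟩ | ⟨R, C⟩) | ⟨⟨R, hR⟩, g⟩
    · simp only [Omega, inl_mem_disjSum, mem_product, mem_powersetCard_univ] at hz
      obtain ⟨hR, hC⟩ := hz
      have hRne : R.Nonempty := card_pos.1 (by omega)
      have hCne : C.Nonempty := card_pos.1 (by omega)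
      show ((R ×ˢ C).image Prod.fst).card = _ ∧ ((R ×ˢ C).image Prod.snd).card = _
      rw [product_image_fst hCne, product_image_snd hRne]
      exact ⟨hR, hC⟩
    · simp only [Omega, inl_mem_disjSum, inr_mem_disjSum, mem_product,
        mem_powersetCard_univ] at hz
      obtain ⟨hR, hC⟩ := hz
      have hRne : R.Nonempty := card_pos.1 (by omega)
      have hCne : C.Nonempty := card_pos.1 (by omega)
      show ((R ×ˢ C).image Prod.fst).card = _ ∧ ((R ×ˢ C).image Prod.snd).card = _
      rw [product_image_fst hCne, product_image_snd hRne]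
      exact ⟨hR, hC⟩
    · rw [caseC_rowSet hR g hd1, caseC_colSet hR g hd1, hR,
        card_image_of_injective _ g.injective, card_univ, Fintype.card_fin]
      exact ⟨rfl, rfl⟩
  have hxk := key x hx
  have hyk := key y hy
  rw [h] at hxk
  rcases x with (⟨R, C⟩ | ⟨R, C⟩) | ⟨⟨R, hR⟩, g⟩ <;>
      rcases y with (⟨R', C'⟩ | ⟨R', C'⟩) | ⟨⟨R', hR'⟩, g'⟩ <;>
      simp only [Sum.elim_inl, Sum.elim_inr] at hxk hyk <;>
      try omega
  · -- A vs A
    simp only [Omega, inl_mem_disjSum, mem_product, mem_powersetCard_univ] at hx hy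
    have hRne : R'.Nonempty := card_pos.1 (by have := hy.1; omega)
    have hCne : C'.Nonempty := card_pos.1 (by have := hy.2; omega)
    have hRne2 : R.Nonempty := card_pos.1 (by have := hx.1; omega)
    have hCne2 : C.Nonempty := card_pos.1 (by have := hx.2; omega)
    have h' : R ×ˢ C = R' ×ˢ C' := h
    have e1 : R = R' := by
      rw [← product_image_fst hCne2 (s := R), ← product_image_fst hCne (s := R'), h']
    have e2 : C = C' := by
      rw [← product_image_snd hRne2 (t := C), ← product_image_snd hRne (t := C'), h']
    rw [e1, e2]
  · -- B vs B
    simp only [Omega, inl_mem_disjSum, inr_mem_disjSum, mem_product,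
      mem_powersetCard_univ] at hx hy
    have hRne : R'.Nonempty := card_pos.1 (by have := hy.1; omega)
    have hCne : C'.Nonempty := card_pos.1 (by have := hy.2; omega)
    have hRne2 : R.Nonempty := card_pos.1 (by have := hx.1; omega)
    have hCne2 : C.Nonempty := card_pos.1 (by have := hx.2; omega)
    have h' : R ×ˢ C = R' ×ˢ C' := h
    have e1 : R = R' := by
      rw [← product_image_fst hCne2 (s := R), ← product_image_fst hCne (s := R'), h']
    have e2 : C = C' := by
      rw [← product_image_snd hRne2 (t := C), ← product_image_snd hRne (t := C'), h']
    rw [e1, e2]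
  · -- C vs C
    have e1 : R = R' := by
      rw [← caseC_rowSet hR g hd1, ← caseC_rowSet hR' g' hd1, h]
    subst e1
    have e2 : (univ.image g : Finset (Fin n₂)) = univ.image g' := by
      rw [← caseC_colSet hR g hd1, ← caseC_colSet hR' g' hd1, h]
    have hT : (univ.image fun k => (R.orderEmbOfFin hR k, g k))
        = (univ.image fun k => (R.orderEmbOfFin hR' k, g' k)) := by
      have t1 : (R ×ˢ univ.image g) \ toSet (.inr (⟨R, hR⟩, g))
          = (univ.image fun k => (R.orderEmbOfFin hR k, g k)) :=
        Finset.sdiff_sdiff_eq_self (caseC_T_subset hR g)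
      have t2 : (R ×ˢ univ.image g') \ toSet (.inr (⟨R, hR'⟩, g'))
          = (univ.image fun k => (R.orderEmbOfFin hR' k, g' k)) :=
        Finset.sdiff_sdiff_eq_self (caseC_T_subset hR' g')
      rw [← t1, ← t2, e2, h]
    have hee : R.orderEmbOfFin hR = R.orderEmbOfFin hR' := rfl
    have hgg : g = g' := by
      apply Function.Embedding.ext
      intro k
      have hk : (R.orderEmbOfFin hR k, g k)
          ∈ (univ.image fun k => (R.orderEmbOfFin hR' k, g' k)) := by
        rw [← hT]; exact mem_image_of_mem _ (mem_univ k)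
      obtain ⟨k', -, hk'⟩ := mem_image.1 hk
      have h1 : R.orderEmbOfFin hR' k' = R.orderEmbOfFin hR k := congrArg Prod.fst hk'
      rw [hee] at h1
      have : k' = k := (R.orderEmbOfFin hR').injective h1
      subst this
      exact (congrArg Prod.snd hk').symm
    rw [hgg]

lemma toSet_surj (hd : 2 ≤ d) {S : Finset (Fin n₁ × Fin n₂)}
    (hS : IsStoppingSet d d S) (hcard : S.card = d * (d + 1)) :
    ∃ x ∈ Omega n₁ n₂ d, toSet x = S := by
  classical
  obtain ⟨hne, hrow, hcol⟩ := hS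
  set R := S.image Prod.fst with hRdef
  set C := S.image Prod.snd with hCdef
  have hSsub : S ⊆ R ×ˢ C := fun p hp =>
    mem_product.2 ⟨mem_image_of_mem _ hp, mem_image_of_mem _ hp⟩
  have hrow' : ∀ i ∈ R, d ≤ (S.filter fun p => p.1 = i).card := by
    intro i hi
    obtain ⟨p, hp, hpi⟩ := mem_image.1 hi
    exact hrow i ⟨p, hp, hpi⟩
  have hcol' : ∀ j ∈ C, d ≤ (S.filter fun p => p.2 = j).card := by
    intro j hj
    obtain ⟨p, hp, hpj⟩ := mem_image.1 hj
    exact hcol j ⟨p, hp, hpj⟩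
  have hfib : S.card = ∑ i ∈ R, (S.filter fun p => p.1 = i).card :=
    card_eq_sum_card_fiberwise fun p hp => mem_image_of_mem _ hp
  have hfibc : S.card = ∑ j ∈ C, (S.filter fun p => p.2 = j).card :=
    card_eq_sum_card_fiberwise fun p hp => mem_image_of_mem _ hp
  have hRle : R.card ≤ d + 1 := by
    by_contra hlt
    push_neg at hlt
    have h1 : R.card * d ≤ S.card := by
      rw [hfib]
      calc R.card * d = ∑ _i ∈ R, d := by rw [sum_const, smul_eq_mul]
        _ ≤ _ := sum_le_sum hrow'
    rw [hcard] at h1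
    nlinarith
  have hCle : C.card ≤ d + 1 := by
    by_contra hlt
    push_neg at hlt
    have h1 : C.card * d ≤ S.card := by
      rw [hfibc]
      calc C.card * d = ∑ _j ∈ C, d := by rw [sum_const, smul_eq_mul]
        _ ≤ _ := sum_le_sum hcol'
    rw [hcard] at h1
    nlinarith
  have hprod : d * (d + 1) ≤ R.card * C.card := by
    rw [← hcard, ← card_product]
    exact card_le_card hSsub
  have hRge : d ≤ R.card :=
    Nat.le_of_mul_le_mul_right
      (le_trans hprod (Nat.mul_le_mul_left _ hCle)) (Nat.succ_pos d)
  have hCge : d ≤ C.card := by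
    have : d * (d + 1) ≤ C.card * (d + 1) := by
      calc d * (d + 1) ≤ R.card * C.card := hprod
        _ = C.card * R.card := Nat.mul_comm _ _
        _ ≤ C.card * (d + 1) := Nat.mul_le_mul_left _ hRle
    exact Nat.le_of_mul_le_mul_right this (Nat.succ_pos d)
  have hcases : (R.card = d ∧ C.card = d + 1) ∨ (R.card = d + 1 ∧ C.card = d)
      ∨ (R.card = d + 1 ∧ C.card = d + 1) := by
    by_cases h1 : R.card = d
    · left
      refine ⟨h1, ?_⟩
      by_contra h2
      have hC : C.card ≤ d := by omega
      have : R.card * C.card ≤ d * d := by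
        rw [h1]; exact Nat.mul_le_mul_left _ hC
      nlinarith
    · have h1' : R.card = d + 1 := by omega
      by_cases h2 : C.card = d
      · exact Or.inr (Or.inl ⟨h1', h2⟩)
      · exact Or.inr (Or.inr ⟨h1', by omega⟩)
  rcases hcases with ⟨hRc, hCc⟩ | ⟨hRc, hCc⟩ | ⟨hRc, hCc⟩
  · -- full d × (d+1) rectangle
    have hSeq : S = R ×ˢ C := by
      apply eq_of_subset_of_card_le hSsub
      rw [card_product, hRc, hCc, hcard]
    refine ⟨.inl (.inl (R, C)), ?_, hSeq.symm⟩
    rw [Omega, inl_mem_disjSum, inl_mem_disjSum, mem_product]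
    exact ⟨mem_powersetCard_univ.2 hRc, mem_powersetCard_univ.2 hCc⟩
  · -- full (d+1) × d rectangle
    have hSeq : S = R ×ˢ C := by
      apply eq_of_subset_of_card_le hSsub
      rw [card_product, hRc, hCc, hcard, Nat.mul_comm]
    refine ⟨.inl (.inr (R, C)), ?_, hSeq.symm⟩
    rw [Omega, inl_mem_disjSum, inr_mem_disjSum, mem_product]
    exact ⟨mem_powersetCard_univ.2 hRc, mem_powersetCard_univ.2 hCc⟩
  · -- (d+1) × (d+1) rectangle minus a permutation
    set T := (R ×ˢ C) \ S with hTdef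
    have hTsub : T ⊆ R ×ˢ C := sdiff_subset
    have hTcard : T.card = d + 1 := by
      rw [hTdef, card_sdiff_of_subset hSsub, card_product, hRc, hCc, hcard]
      have : (d + 1) * (d + 1) = d * (d + 1) + (d + 1) := by ring
      omega
    have hTrow_le : ∀ i ∈ R, (T.filter fun p => p.1 = i).card ≤ 1 := by
      intro i hi
      rw [hTdef, filter_sdiff', card_sdiff_of_subset (filter_subset_filter _ hSsub),
        rowfilter_prod _ _ hi, hCc]
      have := hrow' i hi
      omega
    have hTcol_le : ∀ j ∈ C, (T.filter fun p => p.2 = j).card ≤ 1 := by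
      intro j hj
      rw [hTdef, filter_sdiff', card_sdiff_of_subset (filter_subset_filter _ hSsub),
        colfilter_prod _ _ hj, hRc]
      have := hcol' j hj
      omega
    have hTfib : T.card = ∑ i ∈ R, (T.filter fun p => p.1 = i).card :=
      card_eq_sum_card_fiberwise fun p hp => (mem_product.1 (hTsub hp)).1
    have hTfibc : T.card = ∑ j ∈ C, (T.filter fun p => p.2 = j).card :=
      card_eq_sum_card_fiberwise fun p hp => (mem_product.1 (hTsub hp)).2
    have hTrow : ∀ i ∈ R, (T.filter fun p => p.1 = i).card = 1 := by
      intro i hi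
      by_contra hne'
      have hlt : (T.filter fun p => p.1 = i).card < 1 :=
        lt_of_le_of_ne (hTrow_le i hi) hne'
      have hsum : ∑ i ∈ R, (T.filter fun p => p.1 = i).card < ∑ _i ∈ R, 1 :=
        sum_lt_sum hTrow_le ⟨i, hi, hlt⟩
      rw [sum_const, smul_eq_mul, mul_one, hRc, ← hTfib, hTcard] at hsum
      omega
    have hTcol : ∀ j ∈ C, (T.filter fun p => p.2 = j).card = 1 := by
      intro j hj
      by_contra hne'
      have hlt : (T.filter fun p => p.2 = j).card < 1 :=
        lt_of_le_of_ne (hTcol_le j hj) hne'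
      have hsum : ∑ j ∈ C, (T.filter fun p => p.2 = j).card < ∑ _j ∈ C, 1 :=
        sum_lt_sum hTcol_le ⟨j, hj, hlt⟩
      rw [sum_const, smul_eq_mul, mul_one, hCc, ← hTfibc, hTcard] at hsum
      omega
    have hchoice : ∀ i ∈ R, ∃ p : Fin n₁ × Fin n₂, T.filter (fun q => q.1 = i) = {p} :=
      fun i hi => card_eq_one.1 (hTrow i hi)
    set e := R.orderEmbOfFin hRc with hedef
    have hFex : ∀ k : Fin (d + 1), ∃ p : Fin n₁ × Fin n₂,
        T.filter (fun q => q.1 = e k) = {p} :=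
      fun k => hchoice (e k) (R.orderEmbOfFin_mem hRc k)
    set F : Fin (d + 1) → Fin n₁ × Fin n₂ := fun k => (hFex k).choose with hFdef
    have hFspec : ∀ k, T.filter (fun q => q.1 = e k) = {F k} := fun k => (hFex k).choose_spec
    have hFT : ∀ k, F k ∈ T := by
      intro k
      have : F k ∈ T.filter (fun q => q.1 = e k) := by rw [hFspec k]; exact mem_singleton_self _
      exact (mem_filter.1 this).1
    have hF1 : ∀ k, (F k).1 = e k := by
      intro k
      have : F k ∈ T.filter (fun q => q.1 = e k) := by rw [hFspec k]; exact mem_singleton_self _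
      exact (mem_filter.1 this).2
    have hsndinj : ∀ k k', (F k).2 = (F k').2 → k = k' := by
      intro k k' hkk
      have hjC : (F k).2 ∈ C := (mem_product.1 (hTsub (hFT k))).2
      obtain ⟨q, hq⟩ := card_eq_one.1 (hTcol _ hjC)
      have h1 : F k ∈ T.filter (fun p => p.2 = (F k).2) := mem_filter.2 ⟨hFT k, rfl⟩
      have h2 : F k' ∈ T.filter (fun p => p.2 = (F k).2) := mem_filter.2 ⟨hFT k', hkk.symm⟩
      rw [hq, mem_singleton] at h1 h2
      have hFF : F k = F k' := h1.trans h2.symm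
      apply (R.orderEmbOfFin hRc).injective
      rw [← hF1 k, ← hF1 k', hFF]
    set g : Fin (d + 1) ↪ Fin n₂ := ⟨fun k => (F k).2, fun k k' hk => hsndinj k k' hk⟩
      with hgdef
    have hFinj : Function.Injective F := by
      intro k k' hk
      apply (R.orderEmbOfFin hRc).injective
      rw [← hF1 k, ← hF1 k', hk]
    have himg : (univ.image g : Finset (Fin n₂)) = C := by
      apply eq_of_subset_of_card_le
      · intro j hj
        obtain ⟨k, -, rfl⟩ := mem_image.1 hj
        exact (mem_product.1 (hTsub (hFT k))).2
      · rw [card_image_of_injective _ g.injective, card_univ, Fintype.card_fin, hCc]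
    have hfun : (fun k => (R.orderEmbOfFin hRc k, g k)) = F := by
      funext k
      have : (F k).1 = R.orderEmbOfFin hRc k := hF1 k
      exact Prod.ext this.symm rfl
    have hT' : (univ.image fun k => (R.orderEmbOfFin hRc k, g k)) = T := by
      rw [hfun]
      apply eq_of_subset_of_card_le
      · intro p hp
        obtain ⟨k, -, rfl⟩ := mem_image.1 hp
        exact hFT k
      · rw [card_image_of_injective _ hFinj, card_univ, Fintype.card_fin, hTcard]
    refine ⟨.inr (⟨R, hRc⟩, g), ?_, ?_⟩
    · rw [Omega, inr_mem_disjSum]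
      exact mem_univ _
    · show (R ×ˢ univ.image g) \ (univ.image fun k => (R.orderEmbOfFin hRc k, g k)) = S
      rw [himg, hT', hTdef]
      exact Finset.sdiff_sdiff_eq_self hSsub

end StoppingAux

open Nat in
/-- for `d₁ = d₂ = d ≥ 2`, the number of type-II stopping sets of
size `d(d+1)` in an `n₁ × n₂` array equals
`C(n₁,d)C(n₂,d+1) + C(n₁,d+1)C(n₂,d) + (d+1)!·C(n₁,d+1)·C(n₂,d+1)`. -/
theorem count_stoppingSets_d_times_d_add_one
    (n₁ n₂ d : ℕ) (hd : 2 ≤ d) :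
    Set.ncard {S : Finset (Fin n₁ × Fin n₂) | IsStoppingSet d d S ∧ S.card = d * (d + 1)}
      = n₁.choose d * n₂.choose (d + 1) + n₁.choose (d + 1) * n₂.choose d
        + (d + 1)! * (n₁.choose (d + 1) * n₂.choose (d + 1)) := by
  classical
  have hset : {S : Finset (Fin n₁ × Fin n₂) | IsStoppingSet d d S ∧ S.card = d * (d + 1)}
      = ↑(univ.filter fun S : Finset (Fin n₁ × Fin n₂) =>
          IsStoppingSet d d S ∧ S.card = d * (d + 1)) := by
    ext S; simp
  rw [hset, Set.ncard_coe_finset]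
  have hbij : (StoppingAux.Omega n₁ n₂ d).card
      = (univ.filter fun S : Finset (Fin n₁ × Fin n₂) =>
          IsStoppingSet d d S ∧ S.card = d * (d + 1)).card := by
    apply Finset.card_bij (fun x _ => StoppingAux.toSet x)
    · intro x hx
      simpa using StoppingAux.toSet_mem hd hx
    · intro x hx y hy h
      exact StoppingAux.toSet_injOn hd hx hy h
    · intro S hS
      simp only [mem_filter] at hS
      obtain ⟨x, hx, hxS⟩ := StoppingAux.toSet_surj hd hS.2.1 hS.2.2
      exact ⟨x, hx, hxS⟩
  rw [← hbij, StoppingAux.card_Omega]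
  ring
end

section
/- For d ≥ 2 and 1 ≤ λ ≤ d−1, the number of type-II stopping sets of size d² + d + λ in an n_1 × n_2 array (components with d_1 = d_2 = d) equals (d+1−λ)!·C(d+1,λ)²·C(n_1,d+1)·C(n_2,d+1), and all such stopping sets are non-obvious with a (d+1)×(d+1) rectangular support. -/
/-!
Let `R × C` be the rectangular support of a stopping set `S` with `|S| = d² + d + l`.
Counting `S` by rows and by columns gives `d |R|, d |C| ≤ |S| ≤ |R| |C|`, which for
`1 ≤ l < d` forces `|R| = |C| = d + 1`. Every line of the support then misses at most one
point of `S`, so the `d + 1 - l` holes `Z = (R × C) \ S` form a partial permutation matrix;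
conversely removing such a `Z` from any `(d+1) × (d+1)` rectangle gives a stopping set.
Hence the count is `C(n₁, d+1) C(n₂, d+1)` times the number of partial permutation matrices
of size `d + 1 - l` in a `(d+1) × (d+1)` square, which is `C(d+1, l)² (d+1-l)!`.
-/

open Finset

/-- The paper's partial permutation matrices, viewed as sets of positions. -/
def IsPartialMatching {α β : Type*} (Z : Finset (α × β)) : Prop :=
  Set.InjOn Prod.fst (Z : Set (α × β)) ∧ Set.InjOn Prod.snd (Z : Set (α × β))

theorem Set.InjOn.card_filter_le_one {ι γ : Type*} [DecidableEq γ] {f : ι → γ}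
    {s : Finset ι} (h : Set.InjOn f s) (c : γ) : #{x ∈ s | f x = c} ≤ 1 := by
  simp only [card_le_one, mem_filter]
  exact fun x hx y hy => h hx.1 hy.1 (hx.2.trans hy.2.symm)

namespace Finset

theorem injOn_of_card_filter_le_one {ι γ : Type*} [DecidableEq γ] {f : ι → γ} {s : Finset ι}
    (h : ∀ c ∈ s.image f, #{x ∈ s | f x = c} ≤ 1) : Set.InjOn f s := fun x hx y hy hxy =>
  card_le_one.1 (h (f x) (mem_image_of_mem f hx)) x (mem_filter.2 ⟨hx, rfl⟩) y
    (mem_filter.2 ⟨hy, hxy.symm⟩)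

theorem card_filter_sdiff_add_card_filter {ι : Type*} [DecidableEq ι] {s t : Finset ι}
    (h : s ⊆ t) (p : ι → Prop) [DecidablePred p] :
    #{x ∈ t \ s | p x} + #{x ∈ s | p x} = #{x ∈ t | p x} := by
  rw [← card_sdiff_add_card_eq_card (filter_subset_filter p h)]
  congr 2
  ext x
  simp only [mem_filter, mem_sdiff]
  tauto

theorem card_filter_fst_product {α β : Type*} [DecidableEq α] {R : Finset α} (C : Finset β)
    {i : α} (hi : i ∈ R) : #{p ∈ R ×ˢ C | p.1 = i} = #C := by
  rw [filter_product_left (· = i), filter_eq' R i, if_pos hi, card_product, card_singleton,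
    one_mul]

theorem card_filter_snd_product {α β : Type*} [DecidableEq β] (R : Finset α) {C : Finset β}
    {j : β} (hj : j ∈ C) : #{p ∈ R ×ˢ C | p.2 = j} = #R := by
  rw [filter_product_right (· = j), filter_eq' C j, if_pos hj, card_product, card_singleton,
    mul_one]

end Finset

namespace Function.Embedding

variable {α β : Type*} {A : Finset α} {C : Finset β}

def graph (f : A ↪ C) : Finset (α × β) :=
  univ.map ⟨fun a : A => ((a : α), (f a : β)), fun _ _ h => Subtype.ext (congrArg Prod.fst h)⟩

theorem mem_graph (f : A ↪ C) {p : α × β} :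
    p ∈ f.graph ↔ ∃ a : A, ((a : α), (f a : β)) = p := by
  simp only [graph, mem_map, mem_univ, true_and]
  rfl

theorem graph_subset_product (f : A ↪ C) : f.graph ⊆ A ×ˢ C := fun _ hp => by
  obtain ⟨a, rfl⟩ := f.mem_graph.1 hp
  exact mem_product.2 ⟨a.2, (f a).2⟩

theorem image_fst_graph [DecidableEq α] (f : A ↪ C) : f.graph.image Prod.fst = A := by
  ext x
  simp [mem_graph]

theorem isPartialMatching_graph (f : A ↪ C) : IsPartialMatching f.graph := by
  constructor
  · rintro _ hp _ hq h
    obtain ⟨a, rfl⟩ := f.mem_graph.1 hp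
    obtain ⟨b, rfl⟩ := f.mem_graph.1 hq
    obtain rfl : a = b := Subtype.ext h
    rfl
  · rintro _ hp _ hq h
    obtain ⟨a, rfl⟩ := f.mem_graph.1 hp
    obtain ⟨b, rfl⟩ := f.mem_graph.1 hq
    obtain rfl : a = b := f.injective (Subtype.ext h)
    rfl

theorem graph_injective : Function.Injective (graph : (A ↪ C) → Finset (α × β)) := by
  intro f g h
  ext a
  obtain ⟨b, hb⟩ := g.mem_graph.1 (h ▸ f.mem_graph.2 ⟨a, rfl⟩)
  obtain rfl : b = a := Subtype.ext (congrArg Prod.fst hb)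
  exact congrArg Prod.snd hb.symm

theorem exists_graph_eq [DecidableEq α] {Z : Finset (α × β)} (hZ : Z ⊆ A ×ˢ C)
    (hZA : Z.image Prod.fst = A) (hm : IsPartialMatching Z) : ∃ f : A ↪ C, f.graph = Z := by
  have : ∀ a : A, ∃ c : C, ((a : α), (c : β)) ∈ Z := by
    intro a
    obtain ⟨p, hp, hpa⟩ := mem_image.1 (hZA.symm ▸ a.2 : (a : α) ∈ Z.image Prod.fst)
    exact ⟨⟨p.2, (mem_product.1 (hZ hp)).2⟩, by rw [← hpa]; exact hp⟩
  choose g hg using this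
  refine ⟨⟨g, fun a b hab => Subtype.ext (congrArg Prod.fst
    (hm.2 (hg a) (hg b) (congrArg Subtype.val hab)))⟩, ?_⟩
  ext p
  simp only [mem_graph]
  constructor
  · rintro ⟨a, rfl⟩
    exact hg a
  · intro hp
    have ha : p.1 ∈ A := hZA ▸ mem_image_of_mem _ hp
    exact ⟨⟨p.1, ha⟩, hm.1 (hg _) hp rfl⟩

end Function.Embedding

section PartialMatching

variable {α β : Type*} [DecidableEq α]

open scoped Classical in
theorem card_partialMatchings_of_image_fst_eq (A : Finset α) (C : Finset β) :
    #{Z ∈ (A ×ˢ C).powerset | Z.image Prod.fst = A ∧ IsPartialMatching Z} =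
      (#C).descFactorial #A := by
  rw [← Fintype.card_coe C, ← Fintype.card_coe A, ← Fintype.card_embedding_eq, ← card_univ]
  refine (card_bij (fun f _ => f.graph) (fun f _ => ?_)
    (fun _ _ _ _ h => Function.Embedding.graph_injective h) fun Z hZ => ?_).symm
  · rw [mem_filter, mem_powerset]
    exact ⟨f.graph_subset_product, f.image_fst_graph, f.isPartialMatching_graph⟩
  · rw [mem_filter, mem_powerset] at hZ
    obtain ⟨f, hf⟩ := Function.Embedding.exists_graph_eq hZ.1 hZ.2.1 hZ.2.2
    exact ⟨f, mem_univ f, hf⟩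

open scoped Classical in
theorem card_partialMatchings (R : Finset α) (C : Finset β) (k : ℕ) :
    #{Z ∈ (R ×ˢ C).powerset | #Z = k ∧ IsPartialMatching Z} =
      (#R).choose k * (#C).descFactorial k := by
  have maps : ∀ Z ∈ {Z ∈ (R ×ˢ C).powerset | #Z = k ∧ IsPartialMatching Z},
      Z.image Prod.fst ∈ R.powersetCard k := by
    intro Z hZ
    rw [mem_filter, mem_powerset] at hZ
    obtain ⟨hZR, rfl, hZ⟩ := hZ
    exact mem_powersetCard.2 ⟨fun i hi => by
      obtain ⟨p, hp, rfl⟩ := mem_image.1 hi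
      exact (mem_product.1 (hZR hp)).1, card_image_of_injOn hZ.1⟩
  have fiber : ∀ A ∈ R.powersetCard k,
      {Z ∈ {Z ∈ (R ×ˢ C).powerset | #Z = k ∧ IsPartialMatching Z} | Z.image Prod.fst = A} =
        {Z ∈ (A ×ˢ C).powerset | Z.image Prod.fst = A ∧ IsPartialMatching Z} := by
    intro A hA
    obtain ⟨hAR, hAk⟩ := mem_powersetCard.1 hA
    ext Z
    simp only [mem_filter, mem_powerset]
    constructor
    · rintro ⟨⟨hZR, -, hZ⟩, rfl⟩
      exact ⟨fun p hp => mem_product.2 ⟨mem_image_of_mem _ hp, (mem_product.1 (hZR hp)).2⟩,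
        rfl, hZ⟩
    · rintro ⟨hZA, rfl, hZ⟩
      exact ⟨⟨hZA.trans (product_subset_product_left hAR),
        by rw [← hAk, card_image_of_injOn hZ.1], hZ⟩, rfl⟩
  rw [card_eq_sum_card_fiberwise maps, sum_congr rfl fun A hA => by
    rw [fiber A hA, card_partialMatchings_of_image_fst_eq, (mem_powersetCard.1 hA).2],
    sum_const, card_powersetCard, smul_eq_mul]

end PartialMatching

theorem eq_add_one_of_mul_le_of_le_mul {r c d l : ℕ} (hl : 0 < l) (hld : l < d)
    (hr : d * r ≤ d ^ 2 + d + l) (hc : d * c ≤ d ^ 2 + d + l) (hrc : d ^ 2 + d + l ≤ r * c) :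
    r = d + 1 ∧ c = d + 1 := by
  have hr' : r ≤ d + 1 := by
    by_contra! h
    nlinarith
  have hc' : c ≤ d + 1 := by
    by_contra! h
    nlinarith
  constructor
  · by_contra h
    have : r ≤ d := by omega
    nlinarith
  · by_contra h
    have : c ≤ d := by omega
    nlinarith

namespace IsStoppingSet

variable {n₁ n₂ d₁ d₂ : ℕ} {S : Finset (Fin n₁ × Fin n₂)}

theorem mul_card_image_fst_le (hS : IsStoppingSet d₁ d₂ S) :
    d₂ * #(S.image Prod.fst) ≤ #S :=
  mul_card_image_le_card S d₂ fun i hi => hS.2.1 i (mem_image.1 hi)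

theorem mul_card_image_snd_le (hS : IsStoppingSet d₁ d₂ S) :
    d₁ * #(S.image Prod.snd) ≤ #S :=
  mul_card_image_le_card S d₁ fun j hj => hS.2.2 j (mem_image.1 hj)

theorem card_image_eq {d l : ℕ} (hS : IsStoppingSet d d S) (hl : 0 < l) (hld : l < d)
    (hcard : #S = d ^ 2 + d + l) :
    #(S.image Prod.fst) = d + 1 ∧ #(S.image Prod.snd) = d + 1 :=
  eq_add_one_of_mul_le_of_le_mul hl hld (hcard ▸ hS.mul_card_image_fst_le)
    (hcard ▸ hS.mul_card_image_snd_le)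
    (hcard ▸ (card_le_card subset_product).trans_eq (card_product _ _))

theorem isPartialMatching_support_sdiff (hS : IsStoppingSet d₁ d₂ S)
    (hR : #(S.image Prod.fst) ≤ d₁ + 1) (hC : #(S.image Prod.snd) ≤ d₂ + 1) :
    IsPartialMatching ((S.image Prod.fst ×ˢ S.image Prod.snd) \ S) := by
  constructor
  · refine injOn_of_card_filter_le_one fun i hi => ?_
    have hiR : i ∈ S.image Prod.fst := by
      obtain ⟨p, hp, rfl⟩ := mem_image.1 hi
      exact (mem_product.1 (mem_sdiff.1 hp).1).1
    have hsplit := card_filter_sdiff_add_card_filter (subset_product (s := S)) (·.1 = i)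
    rw [card_filter_fst_product _ hiR] at hsplit
    have := hS.2.1 i (mem_image.1 hiR)
    omega
  · refine injOn_of_card_filter_le_one fun j hj => ?_
    have hjC : j ∈ S.image Prod.snd := by
      obtain ⟨p, hp, rfl⟩ := mem_image.1 hj
      exact (mem_product.1 (mem_sdiff.1 hp).1).2
    have hsplit := card_filter_sdiff_add_card_filter (subset_product (s := S)) (·.2 = j)
    rw [card_filter_snd_product _ hjC] at hsplit
    have := hS.2.2 j (mem_image.1 hjC)
    omega

end IsStoppingSet

section ProductSdiff

variable {α β : Type*} [DecidableEq α] [DecidableEq β] {R : Finset α} {C : Finset β}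
  {Z : Finset (α × β)}

theorem card_sub_one_le_card_filter_fst_product_sdiff (hZ : Z ⊆ R ×ˢ C)
    (hm : Set.InjOn Prod.fst (Z : Set (α × β))) {i : α} (hi : i ∈ R) :
    #C - 1 ≤ #{p ∈ (R ×ˢ C) \ Z | p.1 = i} := by
  have hsplit := card_filter_sdiff_add_card_filter hZ (·.1 = i)
  rw [card_filter_fst_product C hi] at hsplit
  have := hm.card_filter_le_one i
  omega

theorem card_sub_one_le_card_filter_snd_product_sdiff (hZ : Z ⊆ R ×ˢ C)
    (hm : Set.InjOn Prod.snd (Z : Set (α × β))) {j : β} (hj : j ∈ C) :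
    #R - 1 ≤ #{p ∈ (R ×ˢ C) \ Z | p.2 = j} := by
  have hsplit := card_filter_sdiff_add_card_filter hZ (·.2 = j)
  rw [card_filter_snd_product R hj] at hsplit
  have := hm.card_filter_le_one j
  omega

theorem image_fst_product_sdiff (hZ : Z ⊆ R ×ˢ C) (hm : Set.InjOn Prod.fst (Z : Set (α × β)))
    (hC : 2 ≤ #C) : ((R ×ˢ C) \ Z).image Prod.fst = R := by
  refine Subset.antisymm (fun i hi => ?_) fun i hi => ?_
  · obtain ⟨p, hp, rfl⟩ := mem_image.1 hi
    exact (mem_product.1 (mem_sdiff.1 hp).1).1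
  · have := card_sub_one_le_card_filter_fst_product_sdiff hZ hm hi
    obtain ⟨p, hp⟩ := card_pos.1 (by omega : 0 < #{p ∈ (R ×ˢ C) \ Z | p.1 = i})
    exact mem_image.2 ⟨p, (mem_filter.1 hp).1, (mem_filter.1 hp).2⟩

theorem image_snd_product_sdiff (hZ : Z ⊆ R ×ˢ C) (hm : Set.InjOn Prod.snd (Z : Set (α × β)))
    (hR : 2 ≤ #R) : ((R ×ˢ C) \ Z).image Prod.snd = C := by
  refine Subset.antisymm (fun j hj => ?_) fun j hj => ?_
  · obtain ⟨p, hp, rfl⟩ := mem_image.1 hj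
    exact (mem_product.1 (mem_sdiff.1 hp).1).2
  · have := card_sub_one_le_card_filter_snd_product_sdiff hZ hm hj
    obtain ⟨p, hp⟩ := card_pos.1 (by omega : 0 < #{p ∈ (R ×ˢ C) \ Z | p.2 = j})
    exact mem_image.2 ⟨p, (mem_filter.1 hp).1, (mem_filter.1 hp).2⟩

end ProductSdiff

theorem isStoppingSet_product_sdiff {n₁ n₂ : ℕ} {R : Finset (Fin n₁)}
    {C : Finset (Fin n₂)} {Z : Finset (Fin n₁ × Fin n₂)} (hZ : Z ⊆ R ×ˢ C)
    (hm : IsPartialMatching Z)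
    (hne : ((R ×ˢ C) \ Z).Nonempty) : IsStoppingSet (#R - 1) (#C - 1) ((R ×ˢ C) \ Z) :=
  ⟨hne, fun _ ⟨_, hp, hpi⟩ => card_sub_one_le_card_filter_fst_product_sdiff hZ hm.1
      (hpi ▸ (mem_product.1 (mem_sdiff.1 hp).1).1),
    fun _ ⟨_, hp, hpj⟩ => card_sub_one_le_card_filter_snd_product_sdiff hZ hm.2
      (hpj ▸ (mem_product.1 (mem_sdiff.1 hp).1).2)⟩

open scoped Classical in
theorem card_stoppingSets_of_support_eq {n₁ n₂ d l : ℕ} (hl : 0 < l) (hld : l < d)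
    {R : Finset (Fin n₁)} {C : Finset (Fin n₂)} (hR : #R = d + 1) (hC : #C = d + 1) :
    #{S ∈ {S : Finset (Fin n₁ × Fin n₂) | IsStoppingSet d d S ∧ #S = d ^ 2 + d + l} |
        (S.image Prod.fst, S.image Prod.snd) = (R, C)} =
      #{Z ∈ (R ×ˢ C).powerset | #Z = d + 1 - l ∧ IsPartialMatching Z} := by
  have hsq : (d + 1) * (d + 1) = d ^ 2 + d + l + (d + 1 - l) := by
    zify [(by omega : l ≤ d + 1)]
    ring
  refine card_bij' (fun S _ => (R ×ˢ C) \ S) (fun Z _ => (R ×ˢ C) \ Z) ?_ ?_ ?_ ?_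
  · intro S hS
    simp only [mem_filter, mem_univ, true_and, Prod.mk.injEq] at hS
    obtain ⟨⟨hSt, hcard⟩, rfl, rfl⟩ := hS
    rw [mem_filter, mem_powerset, card_sdiff_of_subset subset_product, card_product, hR, hC,
      hcard]
    exact ⟨sdiff_subset, by omega, hSt.isPartialMatching_support_sdiff (by omega) (by omega)⟩
  · intro Z hZ
    rw [mem_filter, mem_powerset] at hZ
    obtain ⟨hZRC, hZcard, hm⟩ := hZ
    have hcard : #((R ×ˢ C) \ Z) = d ^ 2 + d + l := by
      rw [card_sdiff_of_subset hZRC, card_product, hR, hC, hZcard]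
      omega
    have hne : ((R ×ˢ C) \ Z).Nonempty := card_pos.1 (by omega)
    simp only [mem_filter, mem_univ, true_and, Prod.mk.injEq]
    refine ⟨⟨?_, hcard⟩, image_fst_product_sdiff hZRC hm.1 (by omega),
      image_snd_product_sdiff hZRC hm.2 (by omega)⟩
    simpa only [hR, hC, Nat.add_sub_cancel] using isStoppingSet_product_sdiff hZRC hm hne
  · intro S hS
    simp only [mem_filter, mem_univ, true_and, Prod.mk.injEq] at hS
    obtain ⟨-, rfl, rfl⟩ := hS
    exact Finset.sdiff_sdiff_eq_self subset_product
  · intro Z hZ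
    exact Finset.sdiff_sdiff_eq_self (mem_powerset.1 (mem_filter.1 hZ).1)

open scoped Classical in
theorem card_stoppingSets {n₁ n₂ d l : ℕ} (hl : 0 < l) (hld : l < d) :
    #{S : Finset (Fin n₁ × Fin n₂) | IsStoppingSet d d S ∧ #S = d ^ 2 + d + l} =
      n₁.choose (d + 1) * n₂.choose (d + 1) *
        ((d + 1).choose (d + 1 - l) * (d + 1).descFactorial (d + 1 - l)) := by
  have maps : ∀ S ∈ ({S | IsStoppingSet d d S ∧ #S = d ^ 2 + d + l} :
        Finset (Finset (Fin n₁ × Fin n₂))), (S.image Prod.fst, S.image Prod.snd) ∈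
        (univ : Finset (Fin n₁)).powersetCard (d + 1) ×ˢ
          (univ : Finset (Fin n₂)).powersetCard (d + 1) := by
    intro S hS
    obtain ⟨hSt, hcard⟩ := (mem_filter.1 hS).2
    obtain ⟨hR, hC⟩ := hSt.card_image_eq hl hld hcard
    exact mem_product.2 ⟨mem_powersetCard.2 ⟨subset_univ _, hR⟩,
      mem_powersetCard.2 ⟨subset_univ _, hC⟩⟩
  rw [card_eq_sum_card_fiberwise maps, sum_congr rfl fun RC hRC => ?_, sum_const, card_product,
    card_powersetCard, card_powersetCard, card_univ, card_univ, Fintype.card_fin,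
    Fintype.card_fin, smul_eq_mul]
  obtain ⟨hR, hC⟩ := mem_product.1 hRC
  obtain ⟨-, hR⟩ := mem_powersetCard.1 hR
  obtain ⟨-, hC⟩ := mem_powersetCard.1 hC
  rw [card_stoppingSets_of_support_eq hl hld hR hC, card_partialMatchings, hR, hC]

open Nat in
theorem count_stoppingSets_d_sq_add_d_add_l_general
    (n₁ n₂ d l : ℕ) (hl1 : 1 ≤ l) (hl2 : l ≤ d - 1) :
    Set.ncard {S : Finset (Fin n₁ × Fin n₂) |
        IsStoppingSet d d S ∧ S.card = d ^ 2 + d + l}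
      = (d + 1 - l)! * (d + 1).choose l ^ 2 * (n₁.choose (d + 1) * n₂.choose (d + 1)) ∧
    ∀ S : Finset (Fin n₁ × Fin n₂), IsStoppingSet d d S → S.card = d ^ 2 + d + l →
      (S.image Prod.fst).card = d + 1 ∧ (S.image Prod.snd).card = d + 1 ∧
        S ≠ (S.image Prod.fst) ×ˢ (S.image Prod.snd) := by
  classical
  have hld : l < d := by omega
  refine ⟨?_, fun S hS hcard => ?_⟩
  · rw [Set.ncard_eq_toFinset_card', Set.toFinset_ofPred, card_stoppingSets hl1 hld,
      descFactorial_eq_factorial_mul_choose, choose_symm (by omega)]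
    ring
  · obtain ⟨hR, hC⟩ := hS.card_image_eq hl1 hld hcard
    refine ⟨hR, hC, fun hrect => ?_⟩
    have := congrArg card hrect
    rw [card_product, hR, hC, hcard] at this
    nlinarith

open Nat in
/-- for `d ≥ 2` and `1 ≤ l ≤ d-1`, the number of type-II stopping
sets of size `d² + d + l` equals `(d+1-l)!·C(d+1,l)²·C(n₁,d+1)·C(n₂,d+1)`, and
all such stopping sets are non-obvious with a `(d+1)×(d+1)` rectangular
support. -/
theorem count_stoppingSets_d_sq_add_d_add_l
    (n₁ n₂ d l : ℕ) (hd : 2 ≤ d) (hl1 : 1 ≤ l) (hl2 : l ≤ d - 1) :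
    Set.ncard {S : Finset (Fin n₁ × Fin n₂) |
        IsStoppingSet d d S ∧ S.card = d ^ 2 + d + l}
      = (d + 1 - l)! * (d + 1).choose l ^ 2 * (n₁.choose (d + 1) * n₂.choose (d + 1)) ∧
    ∀ S : Finset (Fin n₁ × Fin n₂), IsStoppingSet d d S → S.card = d ^ 2 + d + l →
      (S.image Prod.fst).card = d + 1 ∧ (S.image Prod.snd).card = d + 1 ∧
        S ≠ (S.image Prod.fst) ×ˢ (S.image Prod.snd) :=
  count_stoppingSets_d_sq_add_d_add_l_general n₁ n₂ d l hl1 hl2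
end

section
/- Let C_P be a product code with compact graph having N^c super-edges, colored with M colors in a balanced way (each color used ⌈N^c/M⌉ times at most). If for a given color no edge of that color has infinite rootcheck order (double diversity holds for that color), then every edge e of that color has rootcheck order ρ(e) ≤ ⌈N^c/(2M)⌉. -/
/-- `Solved φ t e` means that, when all edges of color `φ e` are erased in the
complete bipartite (compact) graph with left vertices `Fin a`, right vertices
`Fin b` and edge coloring `φ`, the edge `e` is solved by the iterative
row-column decoder within `t` iterations.  The rootcheck order of `e` is
`ρ(e) = sInf {t | Solved φ t e}` (with `ρ(e) = ∞`, i.e. the infimum of an empty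
set, when `e` is never solved); `Solved φ 1 e` holds iff `e` is a root
(super)symbol, i.e. has a neighboring vertex at which no other incident edge
carries the color `φ e`. -/
def Solved {a b M : ℕ} (φ : Fin a × Fin b → Fin M) : ℕ → Fin a × Fin b → Prop
  | 0, _ => False
  | t + 1, e =>
      (∀ f, f.1 = e.1 → f ≠ e → φ f = φ e → Solved φ t f) ∨
      (∀ f, f.2 = e.2 → f ≠ e → φ f = φ e → Solved φ t f)

section Abstract

variable {α β : Type*}

/-- A cell `f` is lonely in `U` if it is the unique cell of `U` in its row or
in its column. -/
def Lonely (U : Finset (α × β)) (f : α × β) : Prop :=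
  (∀ g ∈ U, g.1 = f.1 → g = f) ∨ (∀ g ∈ U, g.2 = f.2 → g = f)

lemma Lonely.mono {U V : Finset (α × β)} {f : α × β} (h : V ⊆ U) :
    Lonely U f → Lonely V f := by
  rintro (h1 | h1)
  · exact Or.inl fun g hg => h1 g (h hg)
  · exact Or.inr fun g hg => h1 g (h hg)

variable [DecidableEq α] [DecidableEq β]

/-- A finite set of cells is peelable if it can be emptied by repeatedly
removing lonely cells. -/
inductive Peelable : Finset (α × β) → Prop
  | empty : Peelable ∅
  | step : ∀ (U : Finset (α × β)) (f : α × β), f ∈ U → Lonely U f →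
      Peelable (U.erase f) → Peelable U

lemma Peelable.subset {U : Finset (α × β)} (hU : Peelable U) :
    ∀ V ⊆ U, Peelable V := by
  induction hU with
  | empty => intro V hV; rw [Finset.subset_empty] at hV; simpa [hV] using Peelable.empty
  | step U f hf hl hp ih =>
      intro V hV
      by_cases hfV : f ∈ V
      · exact Peelable.step V f hfV (hl.mono hV)
          (ih _ (Finset.erase_subset_erase f hV))
      · exact ih V ((Finset.subset_erase).2 ⟨hV, hfV⟩)

lemma Peelable.exists_lonely {U : Finset (α × β)} (hU : Peelable U)
    (hne : U.Nonempty) : ∃ f ∈ U, Lonely U f := by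
  cases hU with
  | empty => exact absurd hne (by simp)
  | step U f hf hl hp => exact ⟨f, hf, hl⟩

lemma Peelable.card_add_one_le {U : Finset (α × β)} (hU : Peelable U)
    (hne : U.Nonempty) :
    U.card + 1 ≤ (U.image Prod.fst).card + (U.image Prod.snd).card := by
  induction hU with
  | empty => exact absurd hne (by simp)
  | step U f hf hl hp ih =>
      rcases Finset.eq_empty_or_nonempty (U.erase f) with h0 | h0
      · have hcard : U.card = 1 := by
          have := Finset.card_erase_of_mem hf
          have hc : 0 < U.card := Finset.card_pos.2 ⟨f, hf⟩
          rw [h0] at this; simp at this; omega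
        have h1 : 0 < (U.image Prod.fst).card :=
          Finset.card_pos.2 ⟨f.1, Finset.mem_image_of_mem _ hf⟩
        have h2 : 0 < (U.image Prod.snd).card :=
          Finset.card_pos.2 ⟨f.2, Finset.mem_image_of_mem _ hf⟩
        omega
      · have ih' := ih h0
        have hcard : (U.erase f).card = U.card - 1 := Finset.card_erase_of_mem hf
        have hc : 0 < U.card := Finset.card_pos.2 ⟨f, hf⟩
        rcases hl with hrow | hcol
        · -- row lonely: f.1 does not appear among erase
          have hsub : (U.erase f).image Prod.fst ⊆ (U.image Prod.fst).erase f.1 := by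
            intro x hx
            rcases Finset.mem_image.1 hx with ⟨g, hg, rfl⟩
            have hgU := Finset.mem_of_mem_erase hg
            refine Finset.mem_erase.2 ⟨?_, Finset.mem_image_of_mem _ hgU⟩
            intro hx1
            exact (Finset.ne_of_mem_erase hg) (hrow g hgU hx1)
          have h1 : ((U.erase f).image Prod.fst).card ≤ (U.image Prod.fst).card - 1 := by
            have := Finset.card_le_card hsub
            rw [Finset.card_erase_of_mem (Finset.mem_image_of_mem _ hf)] at this
            exact this
          have h2 : ((U.erase f).image Prod.snd).card ≤ (U.image Prod.snd).card :=
            Finset.card_le_card (Finset.image_subset_image (Finset.erase_subset f U))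
          have hr : 0 < (U.image Prod.fst).card :=
            Finset.card_pos.2 ⟨f.1, Finset.mem_image_of_mem _ hf⟩
          omega
        · have hsub : (U.erase f).image Prod.snd ⊆ (U.image Prod.snd).erase f.2 := by
            intro x hx
            rcases Finset.mem_image.1 hx with ⟨g, hg, rfl⟩
            have hgU := Finset.mem_of_mem_erase hg
            refine Finset.mem_erase.2 ⟨?_, Finset.mem_image_of_mem _ hgU⟩
            intro hx1
            exact (Finset.ne_of_mem_erase hg) (hcol g hgU hx1)
          have h1 : ((U.erase f).image Prod.snd).card ≤ (U.image Prod.snd).card - 1 := by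
            have := Finset.card_le_card hsub
            rw [Finset.card_erase_of_mem (Finset.mem_image_of_mem _ hf)] at this
            exact this
          have h2 : ((U.erase f).image Prod.fst).card ≤ (U.image Prod.fst).card :=
            Finset.card_le_card (Finset.image_subset_image (Finset.erase_subset f U))
          have hr : 0 < (U.image Prod.snd).card :=
            Finset.card_pos.2 ⟨f.2, Finset.mem_image_of_mem _ hf⟩
          omega

/-- Counting: if every cell of `U` has a `p`-mate, then every fiber has at
least two elements. -/
lemma count_all {ε γ : Type*} [DecidableEq γ] (U : Finset ε) (p : ε → γ)
    (h : ∀ g ∈ U, ∃ g' ∈ U, g' ≠ g ∧ p g' = p g) :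
    2 * (U.image p).card ≤ U.card := by
  have hcard : U.card = ∑ i ∈ U.image p, (U.filter fun g => p g = i).card :=
    Finset.card_eq_sum_card_fiberwise (fun x hx => Finset.mem_image_of_mem p hx)
  rw [hcard]
  have : ∀ i ∈ U.image p, 2 ≤ (U.filter fun g => p g = i).card := by
    intro i hi
    rcases Finset.mem_image.1 hi with ⟨g, hg, rfl⟩
    rcases h g hg with ⟨g', hg', hne, hpp⟩
    refine Finset.one_lt_card.2 ⟨g, ?_, g', ?_, fun hgg => hne hgg.symm⟩ <;>
      simp [Finset.mem_filter, hg, hg', hpp]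
  calc 2 * (U.image p).card = ∑ _i ∈ U.image p, 2 := by
        rw [Finset.sum_const, smul_eq_mul, mul_comm]
    _ ≤ ∑ i ∈ U.image p, (U.filter fun g => p g = i).card := Finset.sum_le_sum this

variable {ε γ : Type*} [DecidableEq γ]

lemma count_one [DecidableEq ε] (U : Finset ε) (p : ε → γ) (f₀ : ε) (h₀ : f₀ ∈ U)
    (h : ∀ g ∈ U, g ≠ f₀ → ∃ g' ∈ U, g' ≠ g ∧ p g' = p g) :
    2 * (U.image p).card ≤ U.card + 1 := by
  have hcard : U.card = ∑ i ∈ U.image p, (U.filter fun g => p g = i).card :=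
    Finset.card_eq_sum_card_fiberwise (fun x hx => Finset.mem_image_of_mem p hx)
  have hmem : p f₀ ∈ U.image p := Finset.mem_image_of_mem p h₀
  have hsplit : (U.filter fun g => p g = p f₀).card +
      ∑ i ∈ (U.image p).erase (p f₀), (U.filter fun g => p g = i).card
      = ∑ i ∈ U.image p, (U.filter fun g => p g = i).card :=
    Finset.add_sum_erase (U.image p) (fun i => (U.filter fun g => p g = i).card) hmem
  have hone : 1 ≤ (U.filter fun g => p g = p f₀).card :=
    Finset.card_pos.2 ⟨f₀, Finset.mem_filter.2 ⟨h₀, rfl⟩⟩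
  have htwo : ∀ i ∈ (U.image p).erase (p f₀), 2 ≤ (U.filter fun g => p g = i).card := by
    intro i hi
    have hine := Finset.ne_of_mem_erase hi
    rcases Finset.mem_image.1 (Finset.mem_of_mem_erase hi) with ⟨g, hg, rfl⟩
    have hgne : g ≠ f₀ := fun hh => hine (by rw [hh])
    rcases h g hg hgne with ⟨g', hg', hne, hpp⟩
    refine Finset.one_lt_card.2 ⟨g, ?_, g', ?_, fun hgg => hne hgg.symm⟩ <;>
      simp [Finset.mem_filter, hg, hg', hpp]
  have hsum : 2 * ((U.image p).erase (p f₀)).card ≤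
      ∑ i ∈ (U.image p).erase (p f₀), (U.filter fun g => p g = i).card := by
    calc 2 * ((U.image p).erase (p f₀)).card
        = ∑ _i ∈ (U.image p).erase (p f₀), 2 := by
          rw [Finset.sum_const, smul_eq_mul, mul_comm]
      _ ≤ _ := Finset.sum_le_sum htwo
  have hec : ((U.image p).erase (p f₀)).card = (U.image p).card - 1 :=
    Finset.card_erase_of_mem hmem
  have hpos : 0 < (U.image p).card := Finset.card_pos.2 ⟨_, hmem⟩
  omega


lemma two_lonely {α β : Type*} [DecidableEq α] [DecidableEq β]
    {U : Finset (α × β)} (hU : Peelable U) (h2 : 2 ≤ U.card) :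
    ∃ f₁ ∈ U, ∃ f₂ ∈ U, f₁ ≠ f₂ ∧ Lonely U f₁ ∧ Lonely U f₂ := by
  obtain ⟨f₀, hf₀, hl₀⟩ := hU.exists_lonely (Finset.card_pos.1 (by omega))
  by_contra hcon
  push_neg at hcon
  have huniq : ∀ g ∈ U, Lonely U g → g = f₀ := by
    intro g hg hlg
    by_contra hne
    exact hcon f₀ hf₀ g hg (fun h => hne h.symm) hl₀ hlg
  have hmates : ∀ g ∈ U, g ≠ f₀ →
      (∃ g' ∈ U, g' ≠ g ∧ g'.1 = g.1) ∧ (∃ g' ∈ U, g' ≠ g ∧ g'.2 = g.2) := by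
    intro g hg hne
    have hnl : ¬ Lonely U g := fun h => hne (huniq g hg h)
    rw [Lonely] at hnl
    push_neg at hnl
    obtain ⟨⟨g1, hg1, he1, hne1⟩, ⟨g2, hg2, he2, hne2⟩⟩ := hnl
    exact ⟨⟨g1, hg1, hne1, he1⟩, ⟨g2, hg2, hne2, he2⟩⟩
  have hb := hU.card_add_one_le ⟨f₀, hf₀⟩
  by_cases hrow : ∃ x ∈ U, x ≠ f₀ ∧ x.1 = f₀.1
  · have hcl : ∀ g ∈ U, g.2 = f₀.2 → g = f₀ := by
      rcases hl₀ with h | h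
      · obtain ⟨x, hx, hxne, hx1⟩ := hrow; exact absurd (h x hx hx1) hxne
      · exact h
    have hc : 2 * (U.image Prod.snd).card ≤ U.card + 1 :=
      count_one U Prod.snd f₀ hf₀ (fun g hg hne => (hmates g hg hne).2)
    have hr : 2 * (U.image Prod.fst).card ≤ U.card := by
      refine count_all U Prod.fst (fun g hg => ?_)
      by_cases hgf : g = f₀
      · subst hgf; obtain ⟨x, hx, hxne, hx1⟩ := hrow; exact ⟨x, hx, hxne, hx1⟩
      · exact (hmates g hg hgf).1
    omega
  · by_cases hcol : ∃ x ∈ U, x ≠ f₀ ∧ x.2 = f₀.2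
    · have hcl : ∀ g ∈ U, g.1 = f₀.1 → g = f₀ := by
        rcases hl₀ with h | h
        · exact h
        · obtain ⟨x, hx, hxne, hx2⟩ := hcol; exact absurd (h x hx hx2) hxne
      have hc : 2 * (U.image Prod.fst).card ≤ U.card + 1 :=
        count_one U Prod.fst f₀ hf₀ (fun g hg hne => (hmates g hg hne).1)
      have hr : 2 * (U.image Prod.snd).card ≤ U.card := by
        refine count_all U Prod.snd (fun g hg => ?_)
        by_cases hgf : g = f₀
        · subst hgf; obtain ⟨x, hx, hxne, hx2⟩ := hcol; exact ⟨x, hx, hxne, hx2⟩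
        · exact (hmates g hg hgf).2
      omega
    · push_neg at hrow hcol
      have hne' : (U.erase f₀).Nonempty := by
        rw [← Finset.card_pos, Finset.card_erase_of_mem hf₀]; omega
      obtain ⟨g, hg, hlg⟩ :=
        (hU.subset _ (Finset.erase_subset f₀ U)).exists_lonely hne'
      have hgU := Finset.mem_of_mem_erase hg
      have hgne := Finset.ne_of_mem_erase hg
      have hlgU : Lonely U g := by
        rcases hlg with h | h
        · left; intro x hx hx1
          by_cases hxf : x = f₀
          · subst hxf; exact absurd hx1.symm (hrow g hgU hgne)
          · exact h x (Finset.mem_erase.2 ⟨hxf, hx⟩) hx1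
        · right; intro x hx hx2
          by_cases hxf : x = f₀
          · subst hxf; exact absurd hx2.symm (hcol g hgU hgne)
          · exact h x (Finset.mem_erase.2 ⟨hxf, hx⟩) hx2
      exact hgne (huniq g hgU hlgU)

lemma peelable_extend {α β : Type*} [DecidableEq α] [DecidableEq β] :
    ∀ (n : ℕ) (U W : Finset (α × β)), U.card ≤ n → Peelable W → W ⊆ U →
      (∀ f ∈ U, f ∉ W → Lonely U f) → Peelable U := by
  intro n
  induction n with
  | zero =>
      intro U W hc hW hsub _
      have hU : U = ∅ := Finset.card_eq_zero.1 (Nat.le_antisymm hc (Nat.zero_le _))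
      rw [hU]; exact Peelable.empty
  | succ n ih =>
      intro U W hc hW hsub hlone
      by_cases hUW : U ⊆ W
      · rw [Finset.Subset.antisymm hUW hsub]; exact hW
      · obtain ⟨f, hfU, hfW⟩ := Finset.not_subset.1 hUW
        refine Peelable.step U f hfU (hlone f hfU hfW) ?_
        refine ih (U.erase f) W ?_ hW ((Finset.subset_erase).2 ⟨hsub, hfW⟩) ?_
        · rw [Finset.card_erase_of_mem hfU]
          have : 0 < U.card := Finset.card_pos.2 ⟨f, hfU⟩
          omega
        · intro g hg hgW
          exact (hlone g (Finset.mem_of_mem_erase hg) hgW).mono (Finset.erase_subset f U)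

end Abstract

lemma solved_succ {a b M : ℕ} (φ : Fin a × Fin b → Fin M) :
    ∀ (t : ℕ) (f : Fin a × Fin b), Solved φ t f → Solved φ (t + 1) f := by
  intro t
  induction t with
  | zero => intro f h; exact h.elim
  | succ t ih =>
      intro f h
      rcases h with h | h
      · exact Or.inl fun g h1 h2 h3 => ih g (h g h1 h2 h3)
      · exact Or.inr fun g h1 h2 h3 => ih g (h g h1 h2 h3)

lemma solved_mono {a b M : ℕ} (φ : Fin a × Fin b → Fin M) {t t' : ℕ}
    (h : t ≤ t') {f : Fin a × Fin b} (hs : Solved φ t f) : Solved φ t' f := by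
  induction t' with
  | zero => exact Nat.le_zero.1 h ▸ hs
  | succ t' ih =>
      rcases Nat.lt_or_ge t (t' + 1) with hlt | hge
      · exact solved_succ φ t' f (ih (by omega))
      · have : t = t' + 1 := by omega
        exact this ▸ hs

/-- Theorem 1, Case 1: in a compact graph with `N^c = a·b`
super-edges colored with `M` colors, each color class having at most
`⌈N^c/M⌉` edges, if no edge of a given color has infinite rootcheck order, then
every edge `e` of that color has rootcheck order `ρ(e) ≤ ⌈N^c/(2M)⌉`. -/
theorem rootcheck_order_le_ceil
    (a b M : ℕ) (hM : 0 < M) (φ : Fin a × Fin b → Fin M)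
    (hbal : ∀ i : Fin M,
      (Finset.univ.filter fun f => φ f = i).card ≤ (a * b + M - 1) / M)
    (c : Fin M)
    (hfin : ∀ f, φ f = c → ∃ t, Solved φ t f)
    (e : Fin a × Fin b) (he : φ e = c) :
    sInf {t | Solved φ t e} ≤ (a * b + 2 * M - 1) / (2 * M) := by
  have hK : (Finset.univ.filter fun f => φ f = c).card ≤ (a * b + M - 1) / M := hbal c
  classical
  set S : Finset (Fin a × Fin b) := Finset.univ.filter (fun f => φ f = c) with hS
  have heS : e ∈ S := by rw [hS]; simp [he]
  have hcolS : ∀ f ∈ S, φ f = c := by intro f hf; rw [hS] at hf; simpa using hf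
  set U : ℕ → Finset (Fin a × Fin b) :=
    fun t => S.filter (fun f => ¬ Solved φ t f) with hUdef
  have hmemU : ∀ t f, f ∈ U t ↔ f ∈ S ∧ ¬ Solved φ t f := by
    intro t f; rw [hUdef]; exact Finset.mem_filter
  have hUsub : ∀ t, U (t + 1) ⊆ U t := by
    intro t f hf
    rw [hmemU] at hf ⊢
    exact ⟨hf.1, fun hs => hf.2 (solved_succ φ t f hs)⟩
  have hUsub' : ∀ t t', t ≤ t' → U t' ⊆ U t := by
    intro t t' h
    induction t' with
    | zero => rw [Nat.le_zero.1 h]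
    | succ t' ih =>
        rcases Nat.lt_or_ge t (t' + 1) with hlt | hge
        · exact (hUsub t').trans (ih (by omega))
        · rw [show t = t' + 1 by omega]
  have lonely_solved : ∀ t, ∀ f ∈ U t, Lonely (U t) f → Solved φ (t + 1) f := by
    intro t f hf hl
    have hfc : φ f = c := hcolS f ((hmemU t f).1 hf).1
    rcases hl with h | h
    · refine Or.inl fun g hg1 hg2 hg3 => ?_
      by_contra hns
      refine hg2 (h g ?_ hg1)
      rw [hmemU]
      refine ⟨?_, hns⟩
      rw [hS]; simp [hg3, hfc]
    · refine Or.inr fun g hg1 hg2 hg3 => ?_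
      by_contra hns
      refine hg2 (h g ?_ hg1)
      rw [hmemU]
      refine ⟨?_, hns⟩
      rw [hS]; simp [hg3, hfc]
  have solved_lonely : ∀ t, ∀ f ∈ U t, Solved φ (t + 1) f → Lonely (U t) f := by
    intro t f hf hs
    have hfc : φ f = c := hcolS f ((hmemU t f).1 hf).1
    rcases hs with h | h
    · left
      intro g hg hg1
      by_contra hne
      have hgc : φ g = φ f := by rw [hfc]; exact hcolS g ((hmemU t g).1 hg).1
      exact ((hmemU t g).1 hg).2 (h g hg1 hne hgc)
    · right
      intro g hg hg2
      by_contra hne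
      have hgc : φ g = φ f := by rw [hfc]; exact hcolS g ((hmemU t g).1 hg).1
      exact ((hmemU t g).1 hg).2 (h g hg2 hne hgc)
  -- termination time
  choose tf htf using hfin
  obtain ⟨T, hT⟩ : ∃ T, U T = ∅ := by
    refine ⟨S.sup (fun f => if h : φ f = c then tf f h else 0), ?_⟩
    rw [Finset.eq_empty_iff_forall_notMem]
    intro f hf
    rw [hmemU] at hf
    have hfc : φ f = c := hcolS f hf.1
    have hle : tf f hfc ≤ S.sup (fun f => if h : φ f = c then tf f h else 0) := by
      have := Finset.le_sup (f := fun f => if h : φ f = c then tf f h else 0) hf.1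
      simpa [hfc] using this
    exact hf.2 (solved_mono φ hle (htf f hfc))
  have hpeel : ∀ d t, U (t + d) = ∅ → Peelable (U t) := by
    intro d
    induction d with
    | zero => intro t h; rw [show U t = ∅ from h]; exact Peelable.empty
    | succ d ih =>
        intro t h
        have h1 : Peelable (U (t + 1)) := ih (t + 1) (by rw [show t + 1 + d = t + (d + 1) by omega, h])
        refine peelable_extend (U t).card (U t) (U (t + 1)) le_rfl h1 (hUsub t) ?_
        intro f hf hfW
        refine solved_lonely t f hf ?_
        by_contra hns
        refine hfW ?_
        rw [hmemU]
        exact ⟨((hmemU t f).1 hf).1, hns⟩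
  have hpe : ∀ t, Peelable (U t) := by
    intro t
    rcases le_or_gt t T with h | h
    · exact hpeel (T - t) t (by rw [show t + (T - t) = T by omega, hT])
    · have hUt : U t = ∅ := Finset.subset_empty.1 (hT ▸ hUsub' T t h.le)
      rw [hUt]; exact Peelable.empty
  -- one-step decrease
  have hone : ∀ t, (U t).card = 1 → U (t + 1) = ∅ := by
    intro t h1
    obtain ⟨f, hf⟩ := Finset.card_eq_one.1 h1
    rw [Finset.eq_empty_iff_forall_notMem]
    intro g hg
    have hgU : g ∈ U t := hUsub t hg
    have hlf : Lonely (U t) g := by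
      left
      intro x hx _
      have hx' : x = f := by rw [hf] at hx; simpa using hx
      have hg' : g = f := by
        have := hgU; rw [hf] at this; simpa using this
      rw [hx', hg']
    exact ((hmemU (t + 1) g).1 hg).2 (lonely_solved t g hgU hlf)
  have hstep2 : ∀ t, 2 ≤ (U t).card → (U (t + 1)).card + 2 ≤ (U t).card := by
    intro t h2
    obtain ⟨f₁, hf₁, f₂, hf₂, hne, hl₁, hl₂⟩ := two_lonely (hpe t) h2
    have hsub : U (t + 1) ⊆ ((U t).erase f₁).erase f₂ := by
      intro g hg
      have hgt : g ∈ U t := hUsub t hg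
      refine Finset.mem_erase.2 ⟨?_, Finset.mem_erase.2 ⟨?_, hgt⟩⟩
      · rintro rfl
        exact ((hmemU (t + 1) g).1 hg).2 (lonely_solved t g hf₂ hl₂)
      · rintro rfl
        exact ((hmemU (t + 1) g).1 hg).2 (lonely_solved t g hf₁ hl₁)
    have hcle := Finset.card_le_card hsub
    rw [Finset.card_erase_of_mem (Finset.mem_erase.2 ⟨hne.symm, hf₂⟩),
      Finset.card_erase_of_mem hf₁] at hcle
    omega
  -- potential argument
  have hU0 : U 0 = S := by
    rw [hUdef]
    exact Finset.filter_true_of_mem fun f _ => fun h => h.elim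
  have hpot : ∀ t, U t = ∅ ∨ (U t).card + 2 * t ≤ S.card := by
    intro t
    induction t with
    | zero => right; rw [hU0]; omega
    | succ t ih =>
        rcases Finset.eq_empty_or_nonempty (U (t + 1)) with h | h
        · exact Or.inl h
        · right
          have hUt : (U t).Nonempty := h.mono (hUsub t)
          rcases ih with h0 | hle
          · exact absurd (Finset.subset_empty.1 (h0 ▸ hUsub t)) h.ne_empty
          · have hc1 : (U t).card ≠ 1 := fun h1 => h.ne_empty (hone t h1)
            have hcpos : 0 < (U t).card := Finset.card_pos.2 hUt
            have h2 : 2 ≤ (U t).card := by omega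
            have := hstep2 t h2
            omega
  set n := S.card with hn
  have hn1 : 1 ≤ n := Finset.card_pos.2 ⟨e, heS⟩
  have hUempty : U ((n + 1) / 2) = ∅ := by
    rcases Finset.eq_empty_or_nonempty (U ((n + 1) / 2)) with h | h
    · exact h
    · exfalso
      rcases hpot ((n + 1) / 2) with h0 | hle
      · exact h.ne_empty h0
      · have := Finset.card_pos.2 h
        omega
  have hsolvedE : Solved φ ((n + 1) / 2) e := by
    by_contra hns
    have : e ∈ U ((n + 1) / 2) := (hmemU _ e).2 ⟨heS, hns⟩
    rw [hUempty] at this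
    simp at this
  refine le_trans (Nat.sInf_le hsolvedE) ?_
  -- arithmetic
  have hab : 1 ≤ a * b := by
    have hpos : 0 < Fintype.card (Fin a × Fin b) := Fintype.card_pos_iff.2 ⟨e⟩
    rw [Fintype.card_prod, Fintype.card_fin, Fintype.card_fin] at hpos
    omega
  have hKn : n ≤ (a * b + M - 1) / M := hK
  have e1 : (a * b + M - 1) / M = (a * b - 1) / M + 1 := by
    rw [show a * b + M - 1 = (a * b - 1) + M by omega, Nat.add_div_right _ hM]
  have e2 : (a * b + 2 * M - 1) / (2 * M) = (a * b - 1) / (2 * M) + 1 := by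
    rw [show a * b + 2 * M - 1 = (a * b - 1) + 2 * M by omega,
      Nat.add_div_right _ (by omega)]
  have e4 : (a * b - 1) / M / 2 = (a * b - 1) / (2 * M) := by
    rw [Nat.div_div_eq_div_mul, mul_comm M 2]
  have e3 : ((a * b - 1) / M + 2) / 2 = (a * b - 1) / M / 2 + 1 :=
    Nat.add_div_right _ (by omega)
  have hmono : (n + 1) / 2 ≤ ((a * b - 1) / M + 2) / 2 := by
    refine Nat.div_le_div_right ?_
    omega
  omega
end

section
/- With the hypotheses of the rootcheck-order bound (no infinite-order edges of color φ(e)), letting η_min(φ) be the minimum over colors i of the number of edges of color i with rootcheck order 1, every edge e satisfies 2ρ(e) + η_min(φ) − 3 ≤ ⌈N^c/M⌉. -/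
attribute [local instance] Classical.propDecidable

/-!
If `ρ(e) = t + 1 ≥ 2`, then `e` is not solved within `t` iterations, so its row and its column each
contain another edge of color `φ e` not solved within `t - 1` iterations. Following such edges
alternately along rows and columns, once starting in the row of `e` and once in its column, gives an
alternating walk through `e` of `2t - 1 = 2ρ(e) - 3` edges of color `φ e`, none of rootcheck order 1.
The walk never revisits an edge: a closed alternating walk (shortened by one edge when its length is
odd) would be a stopping set, a set of edges each sharing a row and a column with another one, and
no edge of a monochromatic stopping set is ever solved. So the color class of `e`, of size at most
`⌈N^c/M⌉`, contains these `2ρ(e) - 3` edges besides at least `η_min(φ)` edges of rootcheck order 1.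
-/

namespace Solved

variable {a b M : ℕ} {φ : Fin a × Fin b → Fin M}

theorem succ : ∀ {t : ℕ} {f : Fin a × Fin b}, Solved φ t f → Solved φ (t + 1) f
  | _ + 1, _, Or.inl h => Or.inl fun g h₁ h₂ h₃ => succ (h g h₁ h₂ h₃)
  | _ + 1, _, Or.inr h => Or.inr fun g h₁ h₂ h₃ => succ (h g h₁ h₂ h₃)

theorem monotone (f : Fin a × Fin b) : Monotone fun t => Solved φ t f :=
  monotone_nat_of_le_succ fun _ => succ

theorem one_of_sInf_eq_one {f : Fin a × Fin b} (h : sInf {t | Solved φ t f} = 1) :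
    Solved φ 1 f :=
  h ▸ Nat.sInf_mem (Nat.nonempty_of_sInf_eq_succ h)

end Solved

namespace Rootcheck

section Grid

variable {α β : Type*}

def Linked (k : ℕ) (x y : α × β) : Prop :=
  x ≠ y ∧ if Even k then x.1 = y.1 else x.2 = y.2

def IsStoppingSet (S : Set (α × β)) : Prop :=
  ∀ x ∈ S, (∃ y ∈ S, y ≠ x ∧ y.1 = x.1) ∧ (∃ y ∈ S, y ≠ x ∧ y.2 = x.2)

variable {k l : ℕ} {x y z : α × β}

theorem Linked.ne (h : Linked k x y) : x ≠ y := h.1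

theorem Linked.symm (h : Linked k x y) : Linked k y x := by
  obtain ⟨hne, h⟩ := h
  refine ⟨hne.symm, ?_⟩
  split_ifs at h ⊢ <;> exact h.symm

theorem Linked.trans (hxy : Linked k x y) (hyz : Linked k y z) (hxz : x ≠ z) : Linked k x z := by
  obtain ⟨-, hxy⟩ := hxy
  obtain ⟨-, hyz⟩ := hyz
  refine ⟨hxz, ?_⟩
  split_ifs at hxy hyz ⊢ <;> exact hxy.trans hyz

theorem Linked.of_even_iff (h : Linked k x y) (hkl : Even k ↔ Even l) : Linked l x y := by
  simpa only [Linked, hkl] using h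

theorem exists_row_col_of_linked {S : Set (α × β)} (hy : Linked k x y) (hz : Linked (k + 1) x z)
    (hyS : y ∈ S) (hzS : z ∈ S) :
    (∃ u ∈ S, u ≠ x ∧ u.1 = x.1) ∧ (∃ u ∈ S, u ≠ x ∧ u.2 = x.2) := by
  obtain ⟨hxy, hy⟩ := hy
  obtain ⟨hxz, hz⟩ := hz
  by_cases hk : Even k
  · simp only [hk, Nat.even_add_one, not_true, if_true, if_false] at hy hz
    exact ⟨⟨y, hyS, hxy.symm, hy.symm⟩, ⟨z, hzS, hxz.symm, hz.symm⟩⟩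
  · simp only [hk, Nat.even_add_one, not_false_eq_true, if_true, if_false] at hy hz
    exact ⟨⟨z, hzS, hxz.symm, hz.symm⟩, ⟨y, hyS, hxy.symm, hy.symm⟩⟩

theorem isStoppingSet_image_Ico {w : ℕ → α × β} {p q : ℕ} (hpq : p < q) (heven : Even (q - p))
    (hw : ∀ k, p ≤ k → k + 1 < q → Linked k (w k) (w (k + 1)))
    (hclose : Linked (q - 1) (w (q - 1)) (w p)) :
    IsStoppingSet (w '' Set.Ico p q) := by
  rintro _ ⟨k, ⟨hpk, hkq⟩, rfl⟩
  have hmem : ∀ i, p ≤ i → i < q → w i ∈ w '' Set.Ico p q := fun i h₁ h₂ => ⟨i, ⟨h₁, h₂⟩, rfl⟩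
  obtain ⟨y, hyS, hy⟩ : ∃ y ∈ w '' Set.Ico p q, Linked k (w k) y := by
    by_cases hk : k + 1 < q
    · exact ⟨w (k + 1), hmem _ (by omega) hk, hw k hpk hk⟩
    · obtain rfl : k = q - 1 := by omega
      exact ⟨w p, hmem p le_rfl hpq, hclose⟩
  obtain ⟨z, hzS, hz⟩ : ∃ z ∈ w '' Set.Ico p q, Linked (k + 1) (w k) z := by
    by_cases hk : p < k
    · refine ⟨w (k - 1), hmem _ (by omega) (by omega), ?_⟩
      have hlink := hw (k - 1) (by omega) (by omega)
      rw [Nat.sub_add_cancel (by omega)] at hlink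
      exact hlink.symm.of_even_iff (by simp only [Nat.even_iff]; omega)
    · obtain rfl : k = p := by omega
      refine ⟨w (q - 1), hmem _ (by omega) (by omega), ?_⟩
      rw [Nat.even_iff] at heven
      exact hclose.symm.of_even_iff (by simp only [Nat.even_iff]; omega)
  exact exists_row_col_of_linked hy hz hyS hzS

theorem apply_ne_apply_add_of_linked {w : ℕ → α × β} {n : ℕ}
    (hw : ∀ k < n, Linked k (w k) (w (k + 1)))
    (hstop : ∀ p q, p < q → q ≤ n → ¬ IsStoppingSet (w '' Set.Ico p q))
    {d p : ℕ} (hd : 0 < d) (hpd : p + d ≤ n) : w p ≠ w (p + d) := by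
  induction d using Nat.strong_induction_on generalizing p with
  | _ d ih =>
    intro heq
    have hlast := hw (p + d - 1) (by omega)
    rw [Nat.sub_add_cancel (by omega), ← heq] at hlast
    rcases Nat.mod_two_eq_zero_or_one d with hev | hodd
    · exact hstop p (p + d) (by omega) hpd <| isStoppingSet_image_Ico (by omega)
        (by simp only [Nat.even_iff]; omega) (fun k _ hk => hw k (by omega)) hlast
    obtain rfl | hd3 : d = 1 ∨ 3 ≤ d := by omega
    · exact (hw p (by omega)).ne heq
    by_cases hshort : w (p + 1) = w (p + 1 + (d - 2))
    · exact ih (d - 2) (by omega) (by omega) (by omega) hshort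
    rw [show p + 1 + (d - 2) = p + d - 1 by omega] at hshort
    -- `w (p + d - 1)`, `w p = w (p + d)` and `w (p + 1)` lie on one line, so `w p` can be cut.
    have hclose : Linked (p + d - 1) (w (p + d - 1)) (w (p + 1)) :=
      hlast.trans ((hw p (by omega)).of_even_iff (by simp only [Nat.even_iff]; omega))
        (Ne.symm hshort)
    exact hstop (p + 1) (p + d) (by omega) hpd <| isStoppingSet_image_Ico (by omega)
      (by simp only [Nat.even_iff]; omega) (fun k _ hk => hw k (by omega)) hclose

theorem injOn_of_linked {w : ℕ → α × β} {n : ℕ} (hw : ∀ k < n, Linked k (w k) (w (k + 1)))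
    (hstop : ∀ S ⊆ w '' Set.Iic n, IsStoppingSet S → S = ∅) :
    Set.InjOn w (Set.Iic n) := by
  have hstop' : ∀ p q, p < q → q ≤ n → ¬ IsStoppingSet (w '' Set.Ico p q) := by
    intro p q hpq hqn hS
    have hsub : w '' Set.Ico p q ⊆ w '' Set.Iic n :=
      Set.image_mono fun i hi => Set.mem_Iic.mpr (hi.2.le.trans hqn)
    exact Set.notMem_empty _ <| hstop _ hsub hS ▸ Set.mem_image_of_mem w (Set.left_mem_Ico.mpr hpq)
  intro i hi j hj hij
  rw [Set.mem_Iic] at hi hj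
  by_contra hne
  rcases Nat.lt_or_gt_of_ne hne with h | h
  · obtain ⟨d, rfl⟩ := Nat.exists_eq_add_of_lt h
    exact apply_ne_apply_add_of_linked hw hstop' d.succ_pos hj hij
  · obtain ⟨d, rfl⟩ := Nat.exists_eq_add_of_lt h
    exact apply_ne_apply_add_of_linked hw hstop' d.succ_pos hi hij.symm

end Grid

variable {a b M : ℕ} {φ : Fin a × Fin b → Fin M}

theorem not_solved_of_isStoppingSet {S : Set (Fin a × Fin b)} (hS : IsStoppingSet S)
    {c : Fin M} (hc : ∀ x ∈ S, φ x = c) : ∀ t, ∀ x ∈ S, ¬ Solved φ t x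
  | 0, _, _, h => h
  | t + 1, x, hx, Or.inl h =>
      have ⟨y, hy, hyx, hrow⟩ := (hS x hx).1
      not_solved_of_isStoppingSet hS hc t y hy (h y hrow hyx ((hc y hy).trans (hc x hx).symm))
  | t + 1, x, hx, Or.inr h =>
      have ⟨y, hy, hyx, hcol⟩ := (hS x hx).2
      not_solved_of_isStoppingSet hS hc t y hy (h y hcol hyx ((hc y hy).trans (hc x hx).symm))

theorem exists_linked_of_not_solved_succ {t : ℕ} {x : Fin a × Fin b}
    (hx : ¬ Solved φ (t + 1) x) (k : ℕ) :
    ∃ y, Linked k x y ∧ φ y = φ x ∧ ¬ Solved φ t y := by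
  simp only [Solved, not_or, not_forall] at hx
  obtain ⟨⟨y, hrow, hyx, hyc, hy⟩, ⟨y', hcol, hyx', hyc', hy'⟩⟩ := hx
  by_cases hk : Even k
  · exact ⟨y, ⟨Ne.symm hyx, by simp only [hk, if_true]; exact hrow.symm⟩, hyc, hy⟩
  · exact ⟨y', ⟨Ne.symm hyx', by simp only [hk, if_false]; exact hcol.symm⟩, hyc', hy'⟩

theorem exists_linked_chain {m : ℕ} {x : Fin a × Fin b} (hx : ¬ Solved φ (m + 1) x) (s : ℕ) :
    ∃ g : ℕ → Fin a × Fin b, g 0 = x ∧ (∀ j < m, Linked (s + j) (g j) (g (j + 1))) ∧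
      ∀ j ≤ m, φ (g j) = φ x ∧ ¬ Solved φ 1 (g j) := by
  induction m generalizing x s with
  | zero =>
    exact ⟨fun _ => x, rfl, fun j hj => absurd hj (Nat.not_lt_zero j), fun _ _ => ⟨rfl, hx⟩⟩
  | succ m ih =>
    obtain ⟨y, hxy, hyc, hy⟩ := exists_linked_of_not_solved_succ hx s
    obtain ⟨g, hg0, hg, hgc⟩ := ih hy (s + 1)
    refine ⟨fun | 0 => x | j + 1 => g j, rfl, ?_, ?_⟩
    · rintro (_ | j) hj
      · simpa [hg0] using hxy
      · simpa only [Nat.add_right_comm s 1 j, Nat.add_assoc] using hg j (by omega)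
    · rintro (_ | j) hj
      · exact ⟨rfl, fun h => hx (Solved.monotone x (by omega) h)⟩
      · exact (hgc j (by omega)).imp_left (·.trans hyc)

theorem exists_linked_walk {m : ℕ} {e : Fin a × Fin b} (he : ¬ Solved φ (m + 1) e) :
    ∃ w : ℕ → Fin a × Fin b, (∀ k < 2 * m, Linked k (w k) (w (k + 1))) ∧
      ∀ k ≤ 2 * m, φ (w k) = φ e ∧ ¬ Solved φ 1 (w k) := by
  obtain ⟨g, hg0, hg, hgc⟩ := exists_linked_chain he m
  obtain ⟨h, hh0, hh, hhc⟩ := exists_linked_chain he (m + 1)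
  refine ⟨fun k => if k ≤ m then h (m - k) else g (k - m), fun k hk => ?_, fun k hk => ?_⟩
  · by_cases hkm : k < m
    · have hlink := (hh (m - (k + 1)) (by omega)).symm
      rw [show m - (k + 1) + 1 = m - k by omega] at hlink
      simpa only [if_pos hkm.le, if_pos (show k + 1 ≤ m by omega)]
        using hlink.of_even_iff (by simp only [Nat.even_iff]; omega)
    · have hlink := hg (k - m) (by omega)
      rw [show m + (k - m) = k by omega, show k - m + 1 = k + 1 - m by omega] at hlink
      by_cases hkm' : k = m
      · subst hkm'
        simpa [hg0, hh0] using hlink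
      · simpa only [if_neg (show ¬ k ≤ m by omega), if_neg (show ¬ k + 1 ≤ m by omega)]
          using hlink
  · dsimp only
    split_ifs
    · exact hhc _ (by omega)
    · exact hgc _ (by omega)

theorem two_mul_add_one_le_card_not_solved_one {e : Fin a × Fin b}
    (hfin : ∀ f, φ f = φ e → ∃ t, Solved φ t f)
    {m : ℕ} (he : ¬ Solved φ (m + 1) e) :
    2 * m + 1 ≤ (Finset.univ.filter fun f => φ f = φ e ∧ ¬ Solved φ 1 f).card := by
  obtain ⟨w, hw, hwc⟩ := exists_linked_walk he
  have hcolor : ∀ x ∈ w '' Set.Iic (2 * m), φ x = φ e := by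
    rintro _ ⟨k, hk, rfl⟩
    exact (hwc k hk).1
  have hinj : Set.InjOn w (Set.Iic (2 * m)) := by
    refine injOn_of_linked hw fun S hsub hS => Set.eq_empty_of_forall_notMem fun x hx => ?_
    obtain ⟨t, ht⟩ := hfin x (hcolor x (hsub hx))
    exact not_solved_of_isStoppingSet hS (fun y hy => hcolor y (hsub hy)) t x hx ht
  calc 2 * m + 1 = ((Finset.range (2 * m + 1)).image w).card := by
        rw [Finset.card_image_of_injOn, Finset.card_range]
        exact hinj.mono fun k hk => Nat.lt_succ_iff.mp (Finset.mem_range.mp hk)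
    _ ≤ _ := by
        refine Finset.card_le_card fun x hx => ?_
        obtain ⟨k, hk, rfl⟩ := Finset.mem_image.mp hx
        simpa using hwc k (Nat.lt_succ_iff.mp (Finset.mem_range.mp hk))

theorem card_sInf_eq_one_add_card_not_solved_one_le (c : Fin M) :
    (Finset.univ.filter fun f => φ f = c ∧ sInf {t | Solved φ t f} = 1).card +
      (Finset.univ.filter fun f => φ f = c ∧ ¬ Solved φ 1 f).card ≤
      (Finset.univ.filter fun f => φ f = c).card := by
  rw [← Finset.card_union_of_disjoint]
  · exact Finset.card_le_card <| Finset.union_subset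
      (Finset.monotone_filter_right _ fun _ _ h => h.1)
      (Finset.monotone_filter_right _ fun _ _ h => h.1)
  · refine Finset.disjoint_filter.mpr fun f _ h₁ h₂ => h₂.2 ?_
    exact Solved.one_of_sInf_eq_one h₁.2

end Rootcheck

theorem rootcheck_order_etamin_inequality_general
    (a b M : ℕ) (φ : Fin a × Fin b → Fin M)
    (hbal : ∀ i : Fin M,
      (Finset.univ.filter fun f => φ f = i).card ≤ (a * b + M - 1) / M)
    (e : Fin a × Fin b)
    (hfin : ∀ f, φ f = φ e → ∃ t, Solved φ t f) :
    2 * sInf {t | Solved φ t e} +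
      sInf (Set.range fun i : Fin M =>
        (Finset.univ.filter fun f =>
          φ f = i ∧ sInf {t | Solved φ t f} = 1).card)
      ≤ (a * b + M - 1) / M + 3 := by
  refine le_trans (Nat.add_le_add_left (Nat.sInf_le (Set.mem_range_self (φ e))) _) ?_
  have hsplit := Rootcheck.card_sInf_eq_one_add_card_not_solved_one_le (φ := φ) (φ e)
  have hclass := hbal (φ e)
  set r := sInf {t | Solved φ t e}
  rcases Nat.lt_or_ge r 2 with hr | hr
  · omega
  · have he : ¬ Solved φ (r - 2 + 1) e := Nat.notMem_of_lt_sInf (show r - 2 + 1 < r by omega)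
    have hwalk := Rootcheck.two_mul_add_one_le_card_not_solved_one hfin he
    omega

/-- Theorem 1, inequality (8): with `η_min(φ)` the minimum over
the colors `i` of the number of edges of color `i` with rootcheck order 1, if
no edge of color `φ e` has infinite rootcheck order then
`2·ρ(e) + η_min(φ) − 3 ≤ ⌈N^c/M⌉` (stated additively over ℕ). -/
theorem rootcheck_order_etamin_inequality
    (a b M : ℕ) (hM : 0 < M) (φ : Fin a × Fin b → Fin M)
    (hbal : ∀ i : Fin M,
      (Finset.univ.filter fun f => φ f = i).card ≤ (a * b + M - 1) / M)
    (e : Fin a × Fin b)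
    (hfin : ∀ f, φ f = φ e → ∃ t, Solved φ t f) :
    2 * sInf {t | Solved φ t e} +
      sInf (Set.range fun i : Fin M =>
        (Finset.univ.filter fun f =>
          φ f = i ∧ sInf {t | Solved φ t f} = 1).card)
      ≤ (a * b + M - 1) / M + 3 :=
  rootcheck_order_etamin_inequality_general a b M φ hbal e hfin
end

section
/- Let C_P = C_1 ⊗ C_2 with C_i an [n_i, k_i]_q code of rate R_i = k_i/n_i, where (n_i − k_i) divides n_i and M divides N^c = (n_1/(n_1−k_1))·(n_2/(n_2−k_2)). If min(R_1, R_2) ≤ 1 − 1/M, then the compact graph admits a balanced M-coloring φ with ρ_max(φ) = 1, i.e., every super-edge has rootcheck order 1. -/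
/-! Number the cells of the `a × b` grid row by row as `0, …, ab - 1` and, writing `ab = MN`,
colour the cell with number `x` by `x / N`, so that every colour is a run of `N` consecutive
cells. Two cells of one column are at least `b` apart, hence differently coloured once `N ≤ b`,
i.e. once `a ≤ M`; and `k₁/n₁ ≤ 1 - 1/M` says exactly `a = n₁/(n₁-k₁) ≤ M`. If instead the rate
of `C₂` is small, colour the transposed grid. -/

open Finset

lemma card_filter_fst_equiv_eq {α β : Type*} [Fintype α] [Fintype β] {M : ℕ}
    (e : α ≃ Fin M × β) (i : Fin M) :
    #{x | (e x).1 = i} = Fintype.card β := by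
  rw [card_equiv e (t := {i} ×ˢ univ) (by simp [Prod.ext_iff, eq_comm]), card_product,
    card_singleton, one_mul, card_univ]

lemma Nat.div_lt_div_of_add_le {x y N : ℕ} (hN : 0 < N) (h : x + N ≤ y) : x / N < y / N :=
  calc x / N < (x + N) / N := by rw [Nat.add_div_right _ hN]; omega
    _ ≤ y / N := Nat.div_le_div_right h

def rowBlockEquiv {a b M N : ℕ} (h : a * b = M * N) : Fin a × Fin b ≃ Fin M × Fin N :=
  finProdFinEquiv.trans ((finCongr h).trans finProdFinEquiv.symm)

def rowBlockColoring {a b M N : ℕ} (h : a * b = M * N) (e : Fin a × Fin b) : Fin M :=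
  (rowBlockEquiv h e).1

section rowBlockColoring

variable {a b M N : ℕ} (h : a * b = M * N)

lemma card_rowBlockColoring_eq (i : Fin M) : #{e | rowBlockColoring h e = i} = N :=
  (card_filter_fst_equiv_eq (rowBlockEquiv h) i).trans (Fintype.card_fin N)

lemma val_rowBlockColoring (e : Fin a × Fin b) :
    (rowBlockColoring h e : ℕ) = (e.2 + b * e.1) / N := rfl

lemma rowBlockColoring_strictMono_fst (hN : N ≤ b) (c : Fin b) :
    StrictMono fun r : Fin a => rowBlockColoring h (r, c) := by
  intro r r' hr
  have hMN : 0 < M * N := h ▸ Nat.mul_pos r.pos c.pos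
  have hN : 0 < N := Nat.pos_of_mul_pos_left hMN
  rw [Fin.lt_def, val_rowBlockColoring, val_rowBlockColoring]
  apply Nat.div_lt_div_of_add_le hN
  have : b * (r + 1) ≤ b * r' := Nat.mul_le_mul_left b hr
  simp only at this ⊢
  nlinarith

end rowBlockColoring

lemma exists_balanced_coloring_injective_on_columns {a b M N : ℕ} (h : a * b = M * N)
    (hN : N ≤ b) : ∃ φ : Fin a × Fin b → Fin M, (∀ i, #{e | φ e = i} = N) ∧
      ∀ e f, f.2 = e.2 → φ f = φ e → f = e := by
  refine ⟨rowBlockColoring h, card_rowBlockColoring_eq h, ?_⟩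
  rintro ⟨r, c⟩ ⟨r', c'⟩ (rfl : c' = c) hφ
  rw [(rowBlockColoring_strictMono_fst h hN _).injective hφ]

lemma exists_balanced_coloring_injective_on_rows {a b M N : ℕ} (h : a * b = M * N)
    (hN : N ≤ a) : ∃ φ : Fin a × Fin b → Fin M, (∀ i, #{e | φ e = i} = N) ∧
      ∀ e f, f.1 = e.1 → φ f = φ e → f = e := by
  obtain ⟨φ, hbal, hcol⟩ := exists_balanced_coloring_injective_on_columns (b := a)
    ((mul_comm b a).trans h) hN
  refine ⟨φ ∘ Prod.swap, fun i => ?_, fun e f h1 hφ => ?_⟩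
  · rw [← hbal i]
    exact card_equiv (Equiv.prodComm _ _) (by simp)
  · simpa using congrArg Prod.swap (hcol e.swap f.swap h1 hφ)

lemma div_sub_le_of_div_le_one_sub_one_div {n k M : ℕ} (hM : 0 < M)
    (h : (k : ℚ) / n ≤ 1 - 1 / M) : n / (n - k) ≤ M := by
  rcases le_or_gt n k with hk | hk
  · simp [Nat.sub_eq_zero_of_le hk]
  apply Nat.div_le_of_le_mul
  have hn : (0 : ℚ) < n := by exact_mod_cast (by omega : 0 < n)
  have hMq : (0 : ℚ) < M := by exact_mod_cast hM
  have : (n : ℚ) ≤ (n - k) * M := by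
    rw [div_le_iff₀ hn, sub_mul, div_mul_eq_mul_div, one_mul, le_sub_iff_add_le,
      ← le_sub_iff_add_le', div_le_iff₀ hMq] at h
    linarith
  exact_mod_cast (show ((n : ℕ) : ℚ) ≤ (((n - k) * M : ℕ) : ℚ) by
    push_cast [Nat.cast_sub hk.le]; exact this)

theorem exists_balanced_coloring_rho_eq_one_general
    (n₁ k₁ n₂ k₂ M : ℕ) (hM : 0 < M)
    (hMdvd : M ∣ n₁ / (n₁ - k₁) * (n₂ / (n₂ - k₂)))
    (hrate : min ((k₁ : ℚ) / n₁) ((k₂ : ℚ) / n₂) ≤ 1 - 1 / M) :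
    ∃ φ : Fin (n₁ / (n₁ - k₁)) × Fin (n₂ / (n₂ - k₂)) → Fin M,
      (∀ i : Fin M, (Finset.univ.filter fun e => φ e = i).card
          = n₁ / (n₁ - k₁) * (n₂ / (n₂ - k₂)) / M) ∧
      ∀ e, (∀ f, f.1 = e.1 → f ≠ e → φ f ≠ φ e) ∨
           (∀ f, f.2 = e.2 → f ≠ e → φ f ≠ φ e) := by
  obtain ⟨N, hN⟩ := hMdvd
  rw [hN, Nat.mul_div_cancel_left N hM]
  rcases min_le_iff.mp hrate with h₁ | h₂
  · have hNb : N ≤ n₂ / (n₂ - k₂) := Nat.le_of_mul_le_mul_left (by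
      rw [← hN]
      exact Nat.mul_le_mul_right _ (div_sub_le_of_div_le_one_sub_one_div hM h₁)) hM
    obtain ⟨φ, hbal, hcol⟩ := exists_balanced_coloring_injective_on_columns hN hNb
    exact ⟨φ, hbal, fun e => .inr fun f h2 hne hφ => hne (hcol e f h2 hφ)⟩
  · have hNa : N ≤ n₁ / (n₁ - k₁) := Nat.le_of_mul_le_mul_left (by
      rw [← hN, mul_comm M]
      exact Nat.mul_le_mul_left _ (div_sub_le_of_div_le_one_sub_one_div hM h₂)) hM
    obtain ⟨φ, hbal, hrow⟩ := exists_balanced_coloring_injective_on_rows hN hNa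
    exact ⟨φ, hbal, fun e => .inl fun f h1 hne hφ => hne (hrow e f h1 hφ)⟩

/-- Lemma rho=1: for a product code `C₁[n₁,k₁] ⊗ C₂[n₂,k₂]` with
`(nᵢ−kᵢ) ∣ nᵢ` and `M` dividing the number `N^c` of super-edges of the compact
graph (the complete bipartite graph on `n₁/(n₁−k₁)` left and `n₂/(n₂−k₂)` right
vertices), if `min(R₁, R₂) ≤ 1 − 1/M` then the compact graph admits a balanced
`M`-coloring in which every super-edge has rootcheck order 1 (i.e. every edge
has a neighboring vertex at which no other incident edge shares its color). -/
theorem exists_balanced_coloring_rho_eq_one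
    (n₁ k₁ n₂ k₂ M : ℕ) (hM : 0 < M)
    (hk₁ : k₁ < n₁) (hk₂ : k₂ < n₂)
    (hdvd₁ : (n₁ - k₁) ∣ n₁) (hdvd₂ : (n₂ - k₂) ∣ n₂)
    (hMdvd : M ∣ n₁ / (n₁ - k₁) * (n₂ / (n₂ - k₂)))
    (hrate : min ((k₁ : ℚ) / n₁) ((k₂ : ℚ) / n₂) ≤ 1 - 1 / M) :
    ∃ φ : Fin (n₁ / (n₁ - k₁)) × Fin (n₂ / (n₂ - k₂)) → Fin M,
      (∀ i : Fin M, (Finset.univ.filter fun e => φ e = i).card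
          = n₁ / (n₁ - k₁) * (n₂ / (n₂ - k₂)) / M) ∧
      ∀ e, (∀ f, f.1 = e.1 → f ≠ e → φ f ≠ φ e) ∨
           (∀ f, f.2 = e.2 → f ≠ e → φ f ≠ φ e) :=
  exists_balanced_coloring_rho_eq_one_general n₁ k₁ n₂ k₂ M hM hMdvd hrate
end

section
/- Let C_P = C_1 ⊗ C_2 be a product code with non-binary MDS components. Every obvious type-II stopping set (one equal to its rectangular support, an ℓ_1 × ℓ_2 full rectangle with ℓ_1 ≥ d_1, ℓ_2 ≥ d_2) is the support of a codeword of C_P; specifically, there exist x ∈ C_1 of weight ℓ_1 with support the rows of S and y ∈ C_2 of weight ℓ_2 with support the columns of S, and the outer (Kronecker) product x ⊗ y is a codeword of C_P with support exactly S. -/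
/-!
For an MDS code `C` of length `n`, dimension `k` and distance `d = n - k + 1`, the codewords
vanishing off a set `A` with `#A = d` form a space of dimension at least `k - (n - d) = 1`, and
any nonzero one has weight `≥ d`, hence support exactly `A`. Larger supports are reached by
induction: if `x`, `y` have supports `A \ {a}` and `A \ {b}`, then `x + t • y` has support `A`
for all but `#A - 1` scalars `t`, and `#A ≤ n < q`. The product code then contains the rank-one
matrix `x ⊗ y`, whose support is `A ×ˢ B`.
-/

open Finset Module

variable {F ι : Type} [Field F]

lemma Submodule.exists_ne_zero_mem_of_card_compl_lt_finrank [Fintype ι] [DecidableEq ι]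
    (C : Submodule F (ι → F)) (A : Finset ι) (hA : Fintype.card ι - #A < finrank F C) :
    ∃ c ∈ C, c ≠ 0 ∧ ∀ i ∉ A, c i = 0 := by
  let restrict := (LinearMap.funLeft F F ((↑) : ↥Aᶜ → ι)).comp C.subtype
  have hker : LinearMap.ker restrict ≠ ⊥ := LinearMap.ker_ne_bot_of_finrank_lt <| by
    rwa [finrank_pi, Fintype.card_coe, card_compl]
  obtain ⟨⟨c, hcC⟩, hc, hc0⟩ := (Submodule.ne_bot_iff _).1 hker
  refine ⟨c, hcC, fun h => hc0 (by simp [h]), fun i hi => ?_⟩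
  simpa [restrict] using congrFun (LinearMap.mem_ker.1 hc) ⟨i, mem_compl.2 hi⟩

lemma support_eq_of_card_le_hammingNorm [DecidableEq F] [Fintype ι] {c : ι → F} {A : Finset ι}
    (hc : ∀ i ∉ A, c i = 0) (hA : #A ≤ hammingNorm c) (i : ι) : c i ≠ 0 ↔ i ∈ A := by
  have hsub : ({j | c j ≠ 0} : Finset ι) ⊆ A := by
    intro j hj
    exact by_contra fun hjA => (mem_filter.1 hj).2 (hc j hjA)
  rw [← eq_of_subset_of_card_le hsub hA]
  simp

lemma exists_support_add_smul_eq [Fintype F] [DecidableEq ι] {x y : ι → F} {A : Finset ι}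
    {b : ι}
    (hx : ∀ i ∉ A, x i = 0) (hxb : x b ≠ 0) (hy : ∀ i, y i ≠ 0 ↔ i ∈ A.erase b)
    (hA : #A ≤ Fintype.card F) : ∃ t : F, ∀ i, (x + t • y) i ≠ 0 ↔ i ∈ A := by
  classical
  have hbA : b ∈ A := by_contra fun hb => hxb (hx b hb)
  have hbad : #((A.erase b).image fun j => -x j / y j) < #(univ : Finset F) := by
    calc _ ≤ #(A.erase b) := card_image_le
      _ < #A := card_erase_lt_of_mem hbA
      _ ≤ _ := hA
  obtain ⟨t, -, ht⟩ := exists_mem_notMem_of_card_lt_card hbad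
  refine ⟨t, fun i => ?_⟩
  by_cases hib : i = b
  · subst hib
    have hyi : y i = 0 := not_not.1 ((hy i).not.2 (notMem_erase i A))
    simp [hyi, hxb, hbA]
  by_cases hiA : i ∈ A
  · have hyi : y i ≠ 0 := (hy i).2 (mem_erase.2 ⟨hib, hiA⟩)
    simp only [Pi.add_apply, Pi.smul_apply, smul_eq_mul, hiA, iff_true]
    intro h
    refine ht (mem_image.2 ⟨i, mem_erase.2 ⟨hib, hiA⟩, ?_⟩)
    rw [div_eq_iff hyi]
    linear_combination -h
  · have hyi : y i = 0 := not_not.1 fun h => hiA (mem_of_mem_erase ((hy i).1 h))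
    simp [hx i hiA, hyi, hiA]

/-- `hMDS` says that `d ≥ card ι - finrank F C + 1`, so `C` attains the Singleton bound:
it is MDS. -/
lemma Submodule.exists_support_eq_of_finrank_add_lt [Fintype F] [DecidableEq F] [Fintype ι]
    [DecidableEq ι] (C : Submodule F (ι → F)) {d : ℕ}
    (hd : ∀ c ∈ C, c ≠ 0 → d ≤ hammingNorm c)
    (hMDS : Fintype.card ι < finrank F C + d) (A : Finset ι) (hdA : d ≤ #A)
    (hA : #A ≤ Fintype.card F) : ∃ x ∈ C, ∀ i, x i ≠ 0 ↔ i ∈ A := by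
  induction A using Finset.strongInduction with
  | H A ih =>
  rcases hdA.eq_or_lt with rfl | hAd
  · have hAι := card_le_univ A
    obtain ⟨c, hcC, hc0, hcA⟩ := C.exists_ne_zero_mem_of_card_compl_lt_finrank A (by omega)
    exact ⟨c, hcC, support_eq_of_card_le_hammingNorm hcA (hd c hcC hc0)⟩
  -- with `hMDS` this forces `d ≥ 1`, so `A` has two distinct elements
  have hkι : finrank F C ≤ Fintype.card ι := by simpa using C.finrank_le
  obtain ⟨a, ha, b, hb, hab⟩ := one_lt_card.1 (by omega : 1 < #A)
  have herase (i : ι) (hi : i ∈ A) : ∃ x ∈ C, ∀ j, x j ≠ 0 ↔ j ∈ A.erase i :=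
    ih _ (erase_ssubset hi) (by rw [card_erase_of_mem hi]; omega) (card_erase_le.trans hA)
  obtain ⟨x, hxC, hx⟩ := herase a ha
  obtain ⟨y, hyC, hy⟩ := herase b hb
  have hxA (i : ι) (hi : i ∉ A) : x i = 0 :=
    not_not.1 fun h => hi (mem_of_mem_erase ((hx i).1 h))
  have hxb : x b ≠ 0 := (hx b).2 (mem_erase.2 ⟨hab.symm, hb⟩)
  obtain ⟨t, ht⟩ := exists_support_add_smul_eq hxA hxb hy hA
  exact ⟨x + t • y, C.add_mem hxC (C.smul_mem t hyC), ht⟩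

theorem obvious_stoppingSet_is_codeword_support_general
    (q n₁ k₁ d₁ n₂ k₂ d₂ : ℕ) (F : Type) [Field F] [Fintype F] [DecidableEq F]
    (hq : Fintype.card F = q)
    (hqn : max n₁ n₂ < q)
    (C₁ : Submodule F (Fin n₁ → F)) (C₂ : Submodule F (Fin n₂ → F))
    (hk₁ : Module.finrank F C₁ = k₁) (hk₂ : Module.finrank F C₂ = k₂)
    (hmin₁ : (∀ c ∈ C₁, c ≠ 0 → d₁ ≤ hammingNorm c) ∧
      ∃ c ∈ C₁, c ≠ 0 ∧ hammingNorm c = d₁)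
    (hmin₂ : (∀ c ∈ C₂, c ≠ 0 → d₂ ≤ hammingNorm c) ∧
      ∃ c ∈ C₂, c ≠ 0 ∧ hammingNorm c = d₂)
    (hMDS₁ : d₁ = n₁ - k₁ + 1) (hMDS₂ : d₂ = n₂ - k₂ + 1)
    (A : Finset (Fin n₁)) (B : Finset (Fin n₂))
    (hA : d₁ ≤ A.card) (hB : d₂ ≤ B.card) :
    ∃ x ∈ C₁, ∃ y ∈ C₂,
      (∀ i, x i ≠ 0 ↔ i ∈ A) ∧ (∀ j, y j ≠ 0 ↔ j ∈ B) ∧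
      (∀ j : Fin n₂, (fun i => x i * y j) ∈ C₁) ∧
      (∀ i : Fin n₁, (fun j => x i * y j) ∈ C₂) ∧
      (∀ p : Fin n₁ × Fin n₂, x p.1 * y p.2 ≠ 0 ↔ p ∈ A ×ˢ B) := by
  have hAF : #A ≤ Fintype.card F := by
    have := (card_le_univ A).trans_eq (Fintype.card_fin n₁); omega
  have hBF : #B ≤ Fintype.card F := by
    have := (card_le_univ B).trans_eq (Fintype.card_fin n₂); omega
  obtain ⟨x, hxC, hx⟩ :=
    C₁.exists_support_eq_of_finrank_add_lt hmin₁.1 (by rw [Fintype.card_fin]; omega) A hA hAF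
  obtain ⟨y, hyC, hy⟩ :=
    C₂.exists_support_eq_of_finrank_add_lt hmin₂.1 (by rw [Fintype.card_fin]; omega) B hB hBF
  refine ⟨x, hxC, y, hyC, hx, hy, fun j => ?_, fun i => ?_, fun p => ?_⟩
  · rw [show (fun i => x i * y j) = y j • x from funext fun i => mul_comm _ _]
    exact C₁.smul_mem (y j) hxC
  · exact C₂.smul_mem (x i) hyC
  · rw [mem_product, mul_ne_zero_iff, hx, hy]

/-- Proposition on obvious stopping sets: for a product code
`C_P = C₁ ⊗ C₂` with non-binary MDS components (`q > max(n₁,n₂) > 2`), every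
obvious type-II stopping set, i.e. a full rectangle `A ×ˢ B` with
`|A| ≥ d₁` rows and `|B| ≥ d₂` columns, is the support of a codeword of `C_P`:
there exist `x ∈ C₁` with support `A` and `y ∈ C₂` with support `B` such that
the Kronecker product `x ⊗ y` lies in the product code (all its columns are in
`C₁` and all its rows are in `C₂`) and has support exactly `A ×ˢ B`. -/
theorem obvious_stoppingSet_is_codeword_support
    (q n₁ k₁ d₁ n₂ k₂ d₂ : ℕ) (F : Type) [Field F] [Fintype F] [DecidableEq F]
    (hq : Fintype.card F = q)
    (hqn : max n₁ n₂ < q) (hn : 2 < max n₁ n₂)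
    (C₁ : Submodule F (Fin n₁ → F)) (C₂ : Submodule F (Fin n₂ → F))
    (hk₁ : Module.finrank F C₁ = k₁) (hk₂ : Module.finrank F C₂ = k₂)
    (hmin₁ : (∀ c ∈ C₁, c ≠ 0 → d₁ ≤ hammingNorm c) ∧
      ∃ c ∈ C₁, c ≠ 0 ∧ hammingNorm c = d₁)
    (hmin₂ : (∀ c ∈ C₂, c ≠ 0 → d₂ ≤ hammingNorm c) ∧
      ∃ c ∈ C₂, c ≠ 0 ∧ hammingNorm c = d₂)
    (hMDS₁ : d₁ = n₁ - k₁ + 1) (hMDS₂ : d₂ = n₂ - k₂ + 1)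
    (A : Finset (Fin n₁)) (B : Finset (Fin n₂))
    (hA : d₁ ≤ A.card) (hB : d₂ ≤ B.card) :
    ∃ x ∈ C₁, ∃ y ∈ C₂,
      (∀ i, x i ≠ 0 ↔ i ∈ A) ∧ (∀ j, y j ≠ 0 ↔ j ∈ B) ∧
      (∀ j : Fin n₂, (fun i => x i * y j) ∈ C₁) ∧
      (∀ i : Fin n₁, (fun j => x i * y j) ∈ C₂) ∧
      (∀ p : Fin n₁ × Fin n₂, x p.1 * y p.2 ≠ 0 ↔ p ∈ A ×ˢ B) :=
  obvious_stoppingSet_is_codeword_support_general q n₁ k₁ d₁ n₂ k₂ d₂ F hq hqn C₁ C₂ hk₁ hk₂ hmin₁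
    hmin₂ hMDS₁ hMDS₂ A B hA hB
end

section
/- For any type-II stopping set S of a product code with MDS components of distances d_1, d_2 satisfying |S| ≤ (d_1+1)(d_2+1), the rectangular support dimensions satisfy ℓ_1 ≤ d_1 + 1 + ⌊(d_1+1)/d_2⌋ and ℓ_2 ≤ d_2 + 1 + ⌊(d_2+1)/d_1⌋. -/
lemma fiber_count_bound {α β : Type*} [DecidableEq α] [DecidableEq β]
    (S : Finset (α × β)) (d : ℕ)
    (hfib : ∀ i : α, (∃ p ∈ S, p.1 = i) → d ≤ (S.filter fun p => p.1 = i).card) :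
    (S.image Prod.fst).card * d ≤ S.card := by
  have hcard : S.card = ∑ i ∈ S.image Prod.fst, (S.filter fun p => p.1 = i).card :=
    Finset.card_eq_sum_card_fiberwise (fun x hx => Finset.mem_image_of_mem _ hx)
  calc (S.image Prod.fst).card * d = ∑ _i ∈ S.image Prod.fst, d := by
        rw [Finset.sum_const, smul_eq_mul]
    _ ≤ ∑ i ∈ S.image Prod.fst, (S.filter fun p => p.1 = i).card := by
        apply Finset.sum_le_sum
        intro i hi
        obtain ⟨p, hp, hpi⟩ := Finset.mem_image.mp hi
        exact hfib i ⟨p, hp, hpi⟩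
    _ = S.card := hcard.symm

lemma dims_bound_aux (d₁ d₂ m c : ℕ) (hd₂ : 0 < d₂)
    (h1 : m * d₂ ≤ c) (h2 : c ≤ (d₁ + 1) * (d₂ + 1)) :
    m ≤ d₁ + 1 + (d₁ + 1) / d₂ := by
  have hm : m ≤ ((d₁ + 1) * (d₂ + 1)) / d₂ :=
    (Nat.le_div_iff_mul_le hd₂).mpr (h1.trans h2)
  have : (d₁ + 1) * (d₂ + 1) = (d₁ + 1) + (d₁ + 1) * d₂ := by ring
  rw [this, Nat.add_mul_div_right _ _ hd₂] at hm
  omega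

/-- Lemma on the maximal rectangular support: any type-II
stopping set of size at most `(d₁+1)(d₂+1)` has rectangular support dimensions
`ℓ₁ ≤ d₁ + 1 + ⌊(d₁+1)/d₂⌋` and `ℓ₂ ≤ d₂ + 1 + ⌊(d₂+1)/d₁⌋`. -/
theorem stoppingSet_support_dims_bound
    (n₁ n₂ d₁ d₂ : ℕ) (hd₁ : 2 ≤ d₁) (hd₂ : 2 ≤ d₂)
    (S : Finset (Fin n₁ × Fin n₂))
    (h : IsStoppingSet d₁ d₂ S)
    (hw : S.card ≤ (d₁ + 1) * (d₂ + 1)) :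
    (S.image Prod.fst).card ≤ d₁ + 1 + (d₁ + 1) / d₂ ∧
    (S.image Prod.snd).card ≤ d₂ + 1 + (d₂ + 1) / d₁ := by
  obtain ⟨-, hrow, hcol⟩ := h
  constructor
  · exact dims_bound_aux d₁ d₂ _ _ (by omega)
      (fiber_count_bound S d₂ hrow) hw
  · have hswap : ∀ j : Fin n₂,
        (∃ p ∈ S.image Prod.swap, p.1 = j) →
        d₁ ≤ ((S.image Prod.swap).filter fun p => p.1 = j).card := by
      intro j ⟨p, hp, hpj⟩
      obtain ⟨q, hq, rfl⟩ := Finset.mem_image.mp hp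
      have := hcol j ⟨q, hq, hpj⟩
      refine this.trans (le_of_eq ?_)
      rw [Finset.filter_image, Finset.card_image_of_injective _ Prod.swap_injective]
      rfl
    have := fiber_count_bound (S.image Prod.swap) d₁ hswap
    rw [Finset.image_image, Finset.card_image_of_injective _ Prod.swap_injective] at this
    have himg : (S.image (Prod.fst ∘ Prod.swap)) = S.image Prod.snd := rfl
    rw [himg] at this
    exact dims_bound_aux d₂ d₁ _ _ (by omega) this (by rw [mul_comm] at hw; exact hw)
end
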